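/- arXiv:1707.02643 — 10 statements merged into one kernel-verified Lean document; each statement's English description precedes it below -/
import Mathlib

section
/- Let p, q ∈ (0,1) with p + q ≤ 1, and let ε₁, ε₂ > 0. Let A, B ⊆ P([n]) be families with μ_p(A) ≥ 1 − ε₁ and μ_q(B) ≥ 1 − ε₂. Then μ_{p+q}(A ⊔ B) ≥ 1 − ε₁ − ε₂, where A ⊔ B denotes the family of all sets D₁ ∪ D₂ with D₁ ∈ A, D₂ ∈ B and D₁ ∩ D₂ = ∅. -/
/-!
Couple μ_p and μ_q: put each element independently into `S` with probability `p`, into `T`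
with probability `q`, and into neither with probability `1 - p - q`. Then `S ~ μ_p`,
`T ~ μ_q`, and `S ∪ T ~ μ_{p+q}`, with `S, T` always disjoint. Whenever `S ∈ A` and `T ∈ B`,
the union lies in `A ⊔ B`, so the union bound gives `μ_{p+q}(A ⊔ B) ≥ μ_p(A) + μ_q(B) - 1`.
-/

open Finset

/-- The `p`-biased measure of a family of subsets of `Fin n`. -/
def biasedMu (n : ℕ) (p : ℝ) (F : Finset (Finset (Fin n))) : ℝ :=
  ∑ A ∈ F, p ^ A.card * (1 - p) ^ (n - A.card)

section

variable {n : ℕ}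

theorem biasedMu_univ (p : ℝ) : biasedMu n p univ = 1 := by
  rw [biasedMu, Fin.sum_pow_mul_eq_add_pow, add_sub_cancel, one_pow]

def disjointPairs (n : ℕ) : Finset (Finset (Fin n) × Finset (Fin n)) :=
  univ.filter fun st => Disjoint st.1 st.2

def couplingWeight (p q : ℝ) (st : Finset (Fin n) × Finset (Fin n)) : ℝ :=
  p ^ #st.1 * q ^ #st.2 * (1 - p - q) ^ (n - (#st.1 + #st.2))

theorem couplingWeight_nonneg {p q : ℝ} (hp : 0 ≤ p) (hq : 0 ≤ q) (hpq : p + q ≤ 1)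
    (st : Finset (Fin n) × Finset (Fin n)) : 0 ≤ couplingWeight p q st := by
  have : 0 ≤ 1 - p - q := by linarith
  unfold couplingWeight
  positivity

theorem sum_couplingWeight_fst (p q : ℝ) (S : Finset (Fin n)) :
    ∑ T ∈ Sᶜ.powerset, couplingWeight p q (S, T) = p ^ #S * (1 - p) ^ (n - #S) :=
  calc ∑ T ∈ Sᶜ.powerset, couplingWeight p q (S, T)
      = p ^ #S * ∑ T ∈ Sᶜ.powerset, q ^ #T * (1 - p - q) ^ (#Sᶜ - #T) := by
        rw [mul_sum]
        refine sum_congr rfl fun T _ => ?_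
        rw [couplingWeight, card_compl, Fintype.card_fin, Nat.sub_sub]
        ring
    _ = p ^ #S * (1 - p) ^ (n - #S) := by
        rw [sum_pow_mul_eq_add_pow, card_compl, Fintype.card_fin]
        ring_nf

theorem sum_couplingWeight_snd (p q : ℝ) (T : Finset (Fin n)) :
    ∑ S ∈ Tᶜ.powerset, couplingWeight p q (S, T) = q ^ #T * (1 - q) ^ (n - #T) :=
  calc ∑ S ∈ Tᶜ.powerset, couplingWeight p q (S, T)
      = q ^ #T * ∑ S ∈ Tᶜ.powerset, p ^ #S * (1 - p - q) ^ (#Tᶜ - #S) := by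
        rw [mul_sum]
        refine sum_congr rfl fun S _ => ?_
        rw [couplingWeight, card_compl, Fintype.card_fin, add_comm #S, Nat.sub_sub]
        ring
    _ = q ^ #T * (1 - q) ^ (n - #T) := by
        rw [sum_pow_mul_eq_add_pow, card_compl, Fintype.card_fin]
        ring_nf

theorem sum_couplingWeight_union (p q : ℝ) (U : Finset (Fin n)) :
    ∑ S ∈ U.powerset, couplingWeight p q (S, U \ S) = (p + q) ^ #U * (1 - (p + q)) ^ (n - #U) :=
  calc ∑ S ∈ U.powerset, couplingWeight p q (S, U \ S)
      = (∑ S ∈ U.powerset, p ^ #S * q ^ (#U - #S)) * (1 - p - q) ^ (n - #U) := by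
        rw [sum_mul]
        refine sum_congr rfl fun S hS => ?_
        have hSU := mem_powerset.1 hS
        rw [couplingWeight, card_sdiff_of_subset hSU, Nat.add_sub_cancel' (card_le_card hSU)]
    _ = (p + q) ^ #U * (1 - (p + q)) ^ (n - #U) := by
        rw [sum_pow_mul_eq_add_pow, sub_sub]

theorem sum_couplingWeight_filter_fst_mem (p q : ℝ) (A : Finset (Finset (Fin n))) :
    ∑ st ∈ (disjointPairs n).filter (·.1 ∈ A), couplingWeight p q st = biasedMu n p A := by
  rw [sum_finset_product _ A (fun S => Sᶜ.powerset)]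
  · exact sum_congr rfl fun S _ => sum_couplingWeight_fst p q S
  · simp [disjointPairs, subset_compl_iff_disjoint_left, and_comm]

theorem sum_couplingWeight_filter_snd_mem (p q : ℝ) (B : Finset (Finset (Fin n))) :
    ∑ st ∈ (disjointPairs n).filter (·.2 ∈ B), couplingWeight p q st = biasedMu n q B := by
  rw [sum_finset_product_right _ B (fun T => Tᶜ.powerset)]
  · exact sum_congr rfl fun T _ => sum_couplingWeight_snd p q T
  · simp [disjointPairs, subset_compl_iff_disjoint_right, and_comm]

theorem sum_couplingWeight_filter_union_mem (p q : ℝ) (C : Finset (Finset (Fin n))) :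
    ∑ st ∈ (disjointPairs n).filter (fun st => st.1 ∪ st.2 ∈ C), couplingWeight p q st =
      biasedMu n (p + q) C :=
  calc ∑ st ∈ (disjointPairs n).filter (fun st => st.1 ∪ st.2 ∈ C), couplingWeight p q st
      = ∑ x ∈ C.sigma powerset, couplingWeight p q (x.2, x.1 \ x.2) := by
        refine sum_nbij' (fun st => ⟨st.1 ∪ st.2, st.1⟩) (fun x => (x.2, x.1 \ x.2))
          ?_ ?_ ?_ ?_ ?_
        · intro st hst
          simp only [disjointPairs, mem_filter, mem_univ, true_and] at hst
          exact mem_sigma.2 ⟨hst.2, mem_powerset.2 subset_union_left⟩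
        · intro x hx
          have hx' := mem_sigma.1 hx
          simpa [disjointPairs, disjoint_sdiff, union_sdiff_of_subset (mem_powerset.1 hx'.2)]
            using hx'.1
        · intro st hst
          simp only [disjointPairs, mem_filter, mem_univ, true_and] at hst
          simp [union_sdiff_cancel_left hst.1]
        · intro x hx
          simp [union_sdiff_of_subset (mem_powerset.1 (mem_sigma.1 hx).2)]
        · intro st hst
          simp only [disjointPairs, mem_filter, mem_univ, true_and] at hst
          simp [union_sdiff_cancel_left hst.1]
    _ = biasedMu n (p + q) C := by
        rw [sum_sigma]
        exact sum_congr rfl fun U _ => sum_couplingWeight_union p q U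

theorem biasedMu_add_biasedMu_le {p q : ℝ} (hp : 0 ≤ p) (hq : 0 ≤ q) (hpq : p + q ≤ 1)
    {A B C : Finset (Finset (Fin n))} (hC : ∀ S ∈ A, ∀ T ∈ B, Disjoint S T → S ∪ T ∈ C) :
    biasedMu n p A + biasedMu n q B ≤ 1 + biasedMu n (p + q) C := by
  have hw := couplingWeight_nonneg (n := n) hp hq hpq
  set Ω := disjointPairs n
  calc biasedMu n p A + biasedMu n q B
      = ∑ st ∈ Ω.filter (·.1 ∈ A) ∪ Ω.filter (·.2 ∈ B), couplingWeight p q st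
          + ∑ st ∈ Ω.filter (·.1 ∈ A) ∩ Ω.filter (·.2 ∈ B), couplingWeight p q st := by
        rw [sum_union_inter, sum_couplingWeight_filter_fst_mem, sum_couplingWeight_filter_snd_mem]
    _ ≤ ∑ st ∈ Ω.filter (·.1 ∈ univ), couplingWeight p q st
          + ∑ st ∈ Ω.filter (fun st => st.1 ∪ st.2 ∈ C), couplingWeight p q st := by
        gcongr ?_ + ?_ <;> refine sum_le_sum_of_subset_of_nonneg ?_ fun st _ _ => hw st
        · intro st
          simp only [mem_union, mem_filter, mem_univ, and_true]
          tauto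
        · intro st
          simp only [mem_inter, mem_filter]
          rintro ⟨⟨hΩ, hA⟩, -, hB⟩
          exact ⟨hΩ, hC _ hA _ hB (mem_filter.1 hΩ).2⟩
    _ = 1 + biasedMu n (p + q) C := by
        rw [sum_couplingWeight_filter_fst_mem, sum_couplingWeight_filter_union_mem, biasedMu_univ]

end

open Classical in
theorem stmt0_general (n : ℕ) (p q ε₁ ε₂ : ℝ)
    (hp : p ∈ Set.Ioo (0:ℝ) 1) (hq : q ∈ Set.Ioo (0:ℝ) 1) (hpq : p + q ≤ 1)
    (A B : Finset (Finset (Fin n)))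
    (hA : biasedMu n p A ≥ 1 - ε₁) (hB : biasedMu n q B ≥ 1 - ε₂) :
    biasedMu n (p + q)
      ((Finset.univ : Finset (Finset (Fin n))).filter
        (fun D => ∃ D₁ ∈ A, ∃ D₂ ∈ B, Disjoint D₁ D₂ ∧ D = D₁ ∪ D₂)) ≥ 1 - ε₁ - ε₂ := by
  have := biasedMu_add_biasedMu_le hp.1.le hq.1.le hpq
    (C := univ.filter fun D => ∃ D₁ ∈ A, ∃ D₂ ∈ B, Disjoint D₁ D₂ ∧ D = D₁ ∪ D₂)
    fun S hS T hT hST => mem_filter.2 ⟨mem_univ _, S, hS, T, hT, hST, rfl⟩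
  linarith

open Classical in
theorem stmt0 (n : ℕ) (p q ε₁ ε₂ : ℝ)
    (hp : p ∈ Set.Ioo (0:ℝ) 1) (hq : q ∈ Set.Ioo (0:ℝ) 1) (hpq : p + q ≤ 1)
    (hε₁ : 0 < ε₁) (hε₂ : 0 < ε₂)
    (A B : Finset (Finset (Fin n)))
    (hA : biasedMu n p A ≥ 1 - ε₁) (hB : biasedMu n q B ≥ 1 - ε₂) :
    biasedMu n (p + q)
      ((Finset.univ : Finset (Finset (Fin n))).filter
        (fun D => ∃ D₁ ∈ A, ∃ D₂ ∈ B, Disjoint D₁ D₂ ∧ D = D₁ ∪ D₂)) ≥ 1 - ε₁ - ε₂ :=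
  stmt0_general n p q ε₁ ε₂ hp hq hpq A B hA hB
end

section
/- Let F₁, …, F_t ⊆ P([n]) be families that are cross free of a matching (i.e., there are no pairwise disjoint sets A₁ ∈ F₁, …, A_t ∈ F_t), and let p₁, …, p_t ∈ (0,1) with p₁ + ⋯ + p_t ≤ 1. Then Σ_{i=1}^t μ_{p_i}(F_i) ≤ t − 1. -/
open Finset

/-! Colour every point of `[n]` independently, with colour `i` of probability `p i` and no colour
with probability `1 - ∑ i, p i`. The `i`-th colour class is then a `p i`-random set, so
`μ_{p i}(F i)` is the probability that it lies in `F i`. The colour classes are pairwise disjoint,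
so when the families are cross free of a matching at most `t - 1` of these events occur at once;
taking expectations gives the bound. -/

section Coloring

variable {α κ : Type*} [Fintype α]

def colorClass [DecidableEq κ] (c : α → κ) (k : κ) : Finset α := {x | c x = k}

def coloringWeight (w : κ → ℝ) (c : α → κ) : ℝ := ∏ x, w (c x)

theorem coloringWeight_nonneg {w : κ → ℝ} (hw : ∀ k, 0 ≤ w k) (c : α → κ) :
    0 ≤ coloringWeight w c :=
  prod_nonneg fun x _ => hw (c x)

theorem disjoint_colorClass [DecidableEq κ] (c : α → κ) {k l : κ} (hkl : k ≠ l) :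
    Disjoint (colorClass c k) (colorClass c l) :=
  disjoint_filter.2 fun _ _ hk hl => hkl (hk ▸ hl)

variable [DecidableEq α] [Fintype κ]

theorem sum_coloringWeight {w : κ → ℝ} (hw : ∑ k, w k = 1) :
    ∑ c : α → κ, coloringWeight w c = 1 := by
  simp [coloringWeight, ← Fintype.prod_sum, hw]

theorem sum_coloringWeight_colorClass_eq [DecidableEq κ] {w : κ → ℝ} (hw : ∑ k, w k = 1)
    (k : κ) (A : Finset α) :
    ∑ c : α → κ, (if colorClass c k = A then coloringWeight w c else 0) =
      w k ^ #A * (1 - w k) ^ (Fintype.card α - #A) := by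
  -- `g x` keeps the colours at `x` that are compatible with `colorClass c k = A`.
  let g : α → κ → ℝ := fun x o => if (o = k ↔ x ∈ A) then w o else 0
  have hrow : ∀ x, ∑ o, g x o = if x ∈ A then w k else 1 - w k := by
    intro x
    by_cases hx : x ∈ A
    · simp [g, hx]
    · simp [g, hx, sum_ite, filter_ne', sum_erase_eq_sub, hw]
  have hcol : ∀ c : α → κ,
      ∏ x, g x (c x) = if colorClass c k = A then coloringWeight w c else 0 := by
    intro c
    rw [prod_ite_zero, coloringWeight]
    congr 1
    simp [colorClass, Finset.ext_iff]
  calc ∑ c : α → κ, (if colorClass c k = A then coloringWeight w c else 0)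
      = ∏ x, ∑ o, g x o := by simp_rw [Fintype.prod_sum, hcol]
    _ = ∏ x, if x ∈ A then w k else 1 - w k := by simp_rw [hrow]
    _ = w k ^ #A * (1 - w k) ^ (Fintype.card α - #A) := by
      simp [prod_ite, ← compl_filter, card_compl]

end Coloring

theorem biasedMu_eq_sum_coloringWeight {n : ℕ} {κ : Type*} [Fintype κ] [DecidableEq κ]
    {w : κ → ℝ} (hw : ∑ k, w k = 1) (k : κ) (F : Finset (Finset (Fin n))) :
    biasedMu n (w k) F =
      ∑ c : Fin n → κ, if colorClass c k ∈ F then coloringWeight w c else 0 := by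
  calc biasedMu n (w k) F
      = ∑ A ∈ F, ∑ c : Fin n → κ,
          if colorClass c k = A then coloringWeight w c else 0 := by
        simp_rw [sum_coloringWeight_colorClass_eq hw, Fintype.card_fin, biasedMu]
    _ = ∑ c : Fin n → κ, if colorClass c k ∈ F then coloringWeight w c else 0 := by
        rw [sum_comm]
        simp [sum_ite_eq]

def IsCrossFreeOfMatching {α ι : Type*} (F : ι → Finset (Finset α)) : Prop :=
  ¬ ∃ A : ι → Finset α, (∀ i, A i ∈ F i) ∧ ∀ i j, i ≠ j → Disjoint (A i) (A j)

theorem IsCrossFreeOfMatching.card_colorClass_mem_lt {α ι : Type*} [Fintype α] [DecidableEq α]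
    [Fintype ι] [DecidableEq ι] {F : ι → Finset (Finset α)} (hF : IsCrossFreeOfMatching F)
    (c : α → Option ι) :
    #{i | colorClass c (some i) ∈ F i} < Fintype.card ι := by
  refine card_lt_card (filter_ssubset.2 ?_)
  by_contra! hall
  exact hF ⟨fun i => colorClass c (some i), fun i => hall i (mem_univ i),
    fun i j hij => disjoint_colorClass c (Option.some_injective _ |>.ne hij)⟩

theorem stmt1 (n t : ℕ) (F : Fin t → Finset (Finset (Fin n))) (p : Fin t → ℝ)
    (hp : ∀ i, p i ∈ Set.Ioo (0:ℝ) 1) (hsum : ∑ i, p i ≤ 1)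
    (hcross : ¬ ∃ A : Fin t → Finset (Fin n), (∀ i, A i ∈ F i) ∧
      ∀ i j, i ≠ j → Disjoint (A i) (A j)) :
    ∑ i, biasedMu n (p i) (F i) ≤ (t : ℝ) - 1 := by
  let w : Option (Fin t) → ℝ := fun o => o.elim (1 - ∑ i, p i) p
  have hw : ∑ o, w o = 1 := by simp [w, Fintype.sum_option]
  have hw0 : ∀ o, 0 ≤ w o
    | none => sub_nonneg.2 hsum
    | some i => (hp i).1.le
  have hcount : ∀ c : Fin n → Option (Fin t),
      (#{i | colorClass c (some i) ∈ F i} : ℝ) ≤ t - 1 := by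
    intro c
    have := (show IsCrossFreeOfMatching F from hcross).card_colorClass_mem_lt c
    rw [Fintype.card_fin] at this
    rw [le_sub_iff_add_le]
    exact_mod_cast this
  calc ∑ i, biasedMu n (p i) (F i)
      = ∑ c : Fin n → Option (Fin t), ∑ i,
          if colorClass c (some i) ∈ F i then coloringWeight w c else 0 := by
        rw [sum_comm]
        exact sum_congr rfl fun i _ => biasedMu_eq_sum_coloringWeight hw (some i) (F i)
    _ = ∑ c, (#{i | colorClass c (some i) ∈ F i} : ℝ) * coloringWeight w c := by
        simp [← sum_filter]
    _ ≤ ∑ c, ((t : ℝ) - 1) * coloringWeight w c :=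
        sum_le_sum fun c _ =>
          mul_le_mul_of_nonneg_right (hcount c) (coloringWeight_nonneg hw0 c)
    _ = (t : ℝ) - 1 := by rw [← mul_sum, sum_coloringWeight hw, mul_one]
end

section
/- For any constants ζ > 0 and r ∈ ℕ, there exists a constant C(ζ, r) > 0 such that the following holds. Let ζn < k ≤ (1−ζ)n, let ε > 0, and let l < k/C. Suppose F ⊆ P([n]) is a monotone (upward-closed) family with μ(F^(k)) ≤ ε. Then μ(F^(l)) ≤ O_{ζ,r}(ε^r). -/
/-!
Put `b = min ζ 1 / 2`, `C = b^{-(r+1)}`, `K = b^{-r}`, and choose `s` with `b^{s+1} < ε ≤ b^s`.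
A `t`-star (all sets containing a fixed `t`-set) has density `C(n-t, j-t) / C(n, j)` at level `j`,
which lies between `((j-t)/n)^t` and `(j/n)^t`. For `t = min s l` we have `(k-t)/n > b`, so the
`t`-star is denser than `ε ≥ μ(F^(k))` at level `k`. Kruskal–Katona, applied to the complements
(whose shadows are complements of the upper shadows of `F`), then shows that `F^(l)` is smaller
than the `l`-th level of the `t`-star. If `t = l` this forces `F^(l) = ∅`; otherwise `t = s` and
`μ(F^(l)) < (l/n)^s ≤ b^{(r+1)s} ≤ b^{rs} ≤ K ε^r`.
-/

open Finset FinsetFamily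

namespace Nat

lemma choose_mul_descFactorial {n l t : ℕ} (htl : t ≤ l) :
    n.choose l * l.descFactorial t = n.descFactorial t * (n - t).choose (l - t) := by
  rw [descFactorial_eq_factorial_mul_choose, descFactorial_eq_factorial_mul_choose,
    mul_left_comm, choose_mul htl, mul_assoc]

lemma descFactorial_mul_pow_le {l n : ℕ} (hln : l ≤ n) (t : ℕ) :
    l.descFactorial t * n ^ t ≤ l ^ t * n.descFactorial t := by
  induction t with
  | zero => simp
  | succ t ih =>
    have hstep : (l - t) * n ≤ l * (n - t) := by
      rw [Nat.sub_mul, Nat.mul_sub, mul_comm l t]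
      exact Nat.sub_le_sub_left (Nat.mul_le_mul_left t hln) _
    calc l.descFactorial (t + 1) * n ^ (t + 1)
        = (l - t) * n * (l.descFactorial t * n ^ t) := by rw [descFactorial_succ]; ring
      _ ≤ l * (n - t) * (l ^ t * n.descFactorial t) := Nat.mul_le_mul hstep ih
      _ = l ^ (t + 1) * n.descFactorial (t + 1) := by rw [descFactorial_succ]; ring

lemma choose_sub_mul_pow_le {n l t : ℕ} (htl : t ≤ l) (hln : l ≤ n) :
    (n - t).choose (l - t) * n ^ t ≤ l ^ t * n.choose l := by
  refine Nat.le_of_mul_le_mul_left ?_ (descFactorial_pos.2 (htl.trans hln))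
  calc n.descFactorial t * ((n - t).choose (l - t) * n ^ t)
      = n.choose l * (l.descFactorial t * n ^ t) := by
        rw [← mul_assoc, ← choose_mul_descFactorial htl]; ring
    _ ≤ n.choose l * (l ^ t * n.descFactorial t) :=
        Nat.mul_le_mul_left _ (descFactorial_mul_pow_le hln t)
    _ = n.descFactorial t * (l ^ t * n.choose l) := by ring

lemma pow_mul_choose_le_choose_sub_mul_pow {n l t : ℕ} (htl : t ≤ l) (hln : l ≤ n) :
    (l - t) ^ t * n.choose l ≤ (n - t).choose (l - t) * n ^ t := by
  refine Nat.le_of_mul_le_mul_left ?_ (descFactorial_pos.2 (htl.trans hln))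
  have hpow : (l - t) ^ t ≤ l.descFactorial t :=
    (Nat.pow_le_pow_left (by omega) t).trans (pow_sub_le_descFactorial l t)
  calc n.descFactorial t * ((l - t) ^ t * n.choose l)
      ≤ n ^ t * (l.descFactorial t * n.choose l) :=
        Nat.mul_le_mul (descFactorial_le_pow n t) (Nat.mul_le_mul_right _ hpow)
    _ = n.descFactorial t * ((n - t).choose (l - t) * n ^ t) := by
        rw [mul_comm (l.descFactorial t), choose_mul_descFactorial htl]; ring

lemma cast_pow_pos_of_le {n t : ℕ} (htn : t ≤ n) : (0 : ℝ) < (n : ℝ) ^ t := by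
  rcases Nat.eq_zero_or_pos t with rfl | ht
  · simp
  · exact pow_pos (by exact_mod_cast ht.trans_le htn) t

theorem choose_sub_div_choose_le {n l t : ℕ} (htl : t ≤ l) (hln : l ≤ n) :
    ((n - t).choose (l - t) : ℝ) / n.choose l ≤ ((l : ℝ) / n) ^ t := by
  rw [div_le_iff₀ (by exact_mod_cast choose_pos hln), div_pow, div_mul_eq_mul_div,
    le_div_iff₀ (cast_pow_pos_of_le (htl.trans hln))]
  exact_mod_cast choose_sub_mul_pow_le htl hln

theorem sub_div_pow_le_choose_sub_div_choose {n l t : ℕ} (htl : t ≤ l) (hln : l ≤ n) :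
    (((l : ℝ) - t) / n) ^ t ≤ ((n - t).choose (l - t) : ℝ) / n.choose l := by
  rw [le_div_iff₀ (by exact_mod_cast choose_pos hln), div_pow, div_mul_eq_mul_div,
    div_le_iff₀ (cast_pow_pos_of_le (htl.trans hln))]
  have h := (Nat.cast_le (α := ℝ)).2 (pow_mul_choose_le_choose_sub_mul_pow htl hln)
  push_cast [Nat.cast_sub htl] at h
  exact h

end Nat

namespace Finset

variable {α : Type*} [DecidableEq α] [Fintype α]

lemma upShadow_iterate_slice_subset {𝒜 : Finset (Finset α)}
    (h𝒜 : IsUpperSet (𝒜 : Set (Finset α))) {l k : ℕ} (hlk : l ≤ k) :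
    ∂⁺^[k - l] (𝒜 # l) ⊆ 𝒜 # k := by
  intro B hB
  obtain ⟨A, hA, hAB, hcard⟩ := mem_upShadow_iterate_iff_exists_sdiff.1 hB
  rw [mem_slice] at hA ⊢
  refine ⟨h𝒜 hAB hA.1, ?_⟩
  have := card_sdiff_add_card_eq_card hAB
  omega

lemma compls_upShadow_iterate (𝒜 : Finset (Finset α)) (i : ℕ) :
    (∂⁺^[i] 𝒜)ᶜˢ = ∂^[i] 𝒜ᶜˢ :=
  Function.Semiconj.iterate_right (fun ℬ ↦ (shadow_compls (𝒜 := ℬ)).symm) i 𝒜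

theorem kruskal_katona_lovasz_form_upShadow {n m l i : ℕ} {𝒜 : Finset (Finset (Fin n))}
    (hi : i ≤ n - l) (hm : n - l ≤ m) (hmn : m ≤ n)
    (h𝒜 : (𝒜 : Set (Finset (Fin n))).Sized l) (hcard : m.choose (n - l) ≤ #𝒜) :
    m.choose (n - l - i) ≤ #(∂⁺^[i] 𝒜) := by
  rw [← card_compls, compls_upShadow_iterate]
  refine kruskal_katona_lovasz_form hi hm hmn ?_ (by rwa [card_compls])
  simpa using h𝒜.compls

lemma card_slice_div_choose_le_one {n : ℕ} (𝒜 : Finset (Finset (Fin n))) (l : ℕ) :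
    (#(𝒜 # l) : ℝ) / n.choose l ≤ 1 := by
  refine div_le_one_of_le₀ ?_ (Nat.cast_nonneg _)
  exact_mod_cast (sized_slice (𝒜 := 𝒜)).card_le.trans_eq (by simp)

end Finset

namespace IsUpperSet

variable {n : ℕ} {𝒜 : Finset (Finset (Fin n))}

theorem choose_le_card_slice (h𝒜 : IsUpperSet (𝒜 : Set (Finset (Fin n)))) {t l k : ℕ}
    (htl : t ≤ l) (hlk : l ≤ k) (hkn : k ≤ n) (h : (n - t).choose (l - t) ≤ #(𝒜 # l)) :
    (n - t).choose (k - t) ≤ #(𝒜 # k) := by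
  rw [← Nat.choose_symm_of_eq_add (by omega : n - t = (n - l) + (l - t))] at h
  have := kruskal_katona_lovasz_form_upShadow (i := k - l) (by omega) (by omega) (by omega)
    sized_slice h
  rw [Nat.choose_symm_of_eq_add (by omega : n - t = (n - l - (k - l)) + (k - t))] at this
  exact this.trans (card_le_card (upShadow_iterate_slice_subset h𝒜 hlk))

theorem card_slice_lt_choose (h𝒜 : IsUpperSet (𝒜 : Set (Finset (Fin n)))) {t l k : ℕ}
    (htl : t ≤ l) (hlk : l ≤ k) (hkn : k ≤ n)
    (hk : (#(𝒜 # k) : ℝ) / n.choose k < (((k : ℝ) - t) / n) ^ t) :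
    #(𝒜 # l) < (n - t).choose (l - t) := by
  by_contra! hl
  have hstar : ((n - t).choose (k - t) : ℝ) ≤ #(𝒜 # k) := by
    exact_mod_cast h𝒜.choose_le_card_slice htl hlk hkn hl
  refine hk.not_ge ((Nat.sub_div_pow_le_choose_sub_div_choose (htl.trans hlk) hkn).trans ?_)
  gcongr

end IsUpperSet

lemma lt_pow_of_le_pow {b x ε : ℝ} {s t : ℕ} (hb : 0 ≤ b) (hb1 : b ≤ 1) (hbx : b < x)
    (hε1 : ε < 1) (hεs : ε ≤ b ^ s) (hts : t ≤ s) : ε < x ^ t := by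
  rcases Nat.eq_zero_or_pos t with rfl | ht
  · simpa using hε1
  · calc ε ≤ b ^ s := hεs
      _ ≤ b ^ t := pow_le_pow_of_le_one hb hb1 hts
      _ < x ^ t := pow_lt_pow_left₀ hbx hb ht.ne'

theorem IsUpperSet.card_slice_div_choose_le {n k l r : ℕ} {b ε : ℝ}
    {𝒜 : Finset (Finset (Fin n))} (h𝒜 : IsUpperSet (𝒜 : Set (Finset (Fin n))))
    (hb : 0 < b) (hb1 : b < 1) (hlk : l ≤ k) (hkn : k ≤ n) (hbk : b * n < k - l)
    (hln : l ≤ b ^ (r + 1) * n) (hε : 0 < ε) (hε1 : ε < 1)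
    (hk : (#(𝒜 # k) : ℝ) / n.choose k ≤ ε) :
    (#(𝒜 # l) : ℝ) / n.choose l ≤ (b ^ r)⁻¹ * ε ^ r := by
  obtain ⟨s, hεs_succ, hεs⟩ := exists_nat_pow_near_of_lt_one hε hε1.le hb hb1
  have hn : (0 : ℝ) < n := by
    have : (k : ℝ) ≤ n := by exact_mod_cast hkn
    nlinarith [(l.cast_nonneg : (0 : ℝ) ≤ l)]
  have hbx : ∀ t ≤ l, b < ((k : ℝ) - t) / n := fun t htl ↦ by
    have : (t : ℝ) ≤ l := by exact_mod_cast htl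
    rw [lt_div_iff₀ hn]
    linarith
  have hsmall : ∀ t ≤ l, t ≤ s → #(𝒜 # l) < (n - t).choose (l - t) := fun t htl hts ↦
    h𝒜.card_slice_lt_choose htl hlk hkn <|
      hk.trans_lt <| lt_pow_of_le_pow hb.le hb1.le (hbx t htl) hε1 hεs hts
  rcases le_or_gt l s with hls | hsl
  · have : #(𝒜 # l) = 0 := by simpa using hsmall l le_rfl hls
    rw [this, Nat.cast_zero, zero_div]
    positivity
  · calc (#(𝒜 # l) : ℝ) / n.choose l
        ≤ ((n - s).choose (l - s) : ℝ) / n.choose l := by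
          gcongr; exact_mod_cast (hsmall s hsl.le le_rfl).le
      _ ≤ ((l : ℝ) / n) ^ s := Nat.choose_sub_div_choose_le hsl.le (hlk.trans hkn)
      _ ≤ (b ^ (r + 1)) ^ s := by gcongr; rwa [div_le_iff₀ hn]
      _ ≤ (b ^ s) ^ r := by
          rw [← pow_mul, ← pow_mul]
          exact pow_le_pow_of_le_one hb.le hb1.le (by nlinarith)
      _ = (b ^ r)⁻¹ * (b ^ (s + 1)) ^ r := by
          rw [pow_succ, mul_pow, mul_comm ((b ^ s) ^ r),
            inv_mul_cancel_left₀ (pow_ne_zero _ hb.ne')]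
      _ ≤ (b ^ r)⁻¹ * ε ^ r := by gcongr

theorem stmt4 (ζ : ℝ) (hζ : 0 < ζ) (r : ℕ) :
    ∃ C K : ℝ, 0 < C ∧ 0 < K ∧
      ∀ (n k l : ℕ) (ε : ℝ) (F : Finset (Finset (Fin n))),
        (∀ A ∈ F, ∀ B : Finset (Fin n), A ⊆ B → B ∈ F) →
        ζ * n < k → (k : ℝ) ≤ (1 - ζ) * n → 0 < ε → (l : ℝ) < k / C →
        ((F.filter (fun A => A.card = k)).card : ℝ) / (n.choose k) ≤ ε →
        ((F.filter (fun A => A.card = l)).card : ℝ) / (n.choose l) ≤ K * ε ^ r := by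
  set b := min ζ 1 / 2 with hb_def
  have hb : 0 < b := by positivity
  have hbζ : b ≤ ζ / 2 := by linarith [min_le_left ζ 1]
  have hb1 : b < 1 := by linarith [min_le_right ζ 1]
  refine ⟨(b ^ (r + 1))⁻¹, (b ^ r)⁻¹, by positivity, by positivity, ?_⟩
  intro n k l ε F hF hζk hkn hε hlC hk
  have hF : IsUpperSet (F : Set (Finset (Fin n))) := fun A B hAB hA ↦ hF A hA B hAB
  have hkn : k ≤ n := by exact_mod_cast (show (k : ℝ) ≤ n by nlinarith [n.cast_nonneg (α := ℝ)])
  rw [div_inv_eq_mul] at hlC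
  have hbr : b ^ (r + 1) ≤ b := pow_le_of_le_one hb.le hb1.le (by omega)
  have hlk : (l : ℝ) < k / 2 := by nlinarith [k.cast_nonneg (α := ℝ)]
  rcases lt_or_ge ε 1 with hε1 | hε1
  · refine hF.card_slice_div_choose_le hb hb1 (by exact_mod_cast (show (l : ℝ) ≤ k by linarith))
      hkn (by nlinarith) ?_ hε hε1 hk
    nlinarith [(Nat.cast_le (α := ℝ)).2 hkn, pow_pos hb (r + 1)]
  · calc _ ≤ (1 : ℝ) := card_slice_div_choose_le_one F l
      _ ≤ (b ^ r)⁻¹ * ε ^ r :=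
        one_le_mul_of_one_le_of_one_le
          ((one_le_inv₀ (by positivity)).2 (pow_le_one₀ hb.le hb1.le)) (one_le_pow₀ hε1)
end

section
/- Let t ≥ 2 and let U₁, …, U_t be finite sets, each of size at least t − 1, such that there do not exist pairwise distinct elements i₁ ∈ U₁, …, i_t ∈ U_t. Then U₁ = U₂ = ⋯ = U_t and each |U_i| = t − 1. -/
/-!
By Hall's theorem some set `s` of indices has fewer than `|s|` elements in its union. Every
`U i` has at least `n - 1` elements (`n` the number of indices), so this union has exactly
`n - 1` elements and `s` is all indices. Each `U i` is then a subset of the union of the same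
size, hence equal to it.
-/

open Finset

section

variable {ι α : Type*} [Fintype ι] [DecidableEq α] {U : ι → Finset α}

theorem eq_univ_of_card_biUnion_lt (hcard : ∀ i, Fintype.card ι - 1 ≤ #(U i))
    {s : Finset ι} (hs : #(s.biUnion U) < #s) :
    s = univ ∧ #(s.biUnion U) = Fintype.card ι - 1 := by
  obtain ⟨i, hi⟩ : s.Nonempty := card_pos.mp (by omega)
  have hUi : #(U i) ≤ #(s.biUnion U) := card_le_card (subset_biUnion_of_mem U hi)
  have hs_le : #s ≤ Fintype.card ι := card_le_univ s
  have hUi_card := hcard i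
  have hs_card : #s = Fintype.card ι := by omega
  exact ⟨eq_univ_of_card s hs_card, by omega⟩

theorem eq_biUnion_univ_of_not_exists_injective (hcard : ∀ i, Fintype.card ι - 1 ≤ #(U i))
    (hsdr : ¬ ∃ f : ι → α, Function.Injective f ∧ ∀ i, f i ∈ U i) :
    (∀ i, U i = univ.biUnion U) ∧ #(univ.biUnion U) = Fintype.card ι - 1 := by
  rw [← all_card_le_biUnion_card_iff_existsInjective'] at hsdr
  push Not at hsdr
  obtain ⟨s, hs⟩ := hsdr
  obtain ⟨rfl, hunion⟩ := eq_univ_of_card_biUnion_lt hcard hs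
  exact ⟨fun i => eq_of_subset_of_card_le (subset_biUnion_of_mem U (mem_univ i)) (hunion ▸ hcard i),
    hunion⟩

end

theorem stmt8_general {α : Type*} [DecidableEq α] (t : ℕ)
    (U : Fin t → Finset α)
    (hcard : ∀ i, t - 1 ≤ (U i).card)
    (hsdr : ¬ ∃ f : Fin t → α, Function.Injective f ∧ ∀ i, f i ∈ U i) :
    (∀ i j, U i = U j) ∧ ∀ i, (U i).card = t - 1 := by
  obtain ⟨hU, hunion⟩ :=
    eq_biUnion_univ_of_not_exists_injective (by simpa using hcard) hsdr
  rw [Fintype.card_fin] at hunion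
  exact ⟨fun i j => (hU i).trans (hU j).symm, fun i => hU i ▸ hunion⟩

theorem stmt8 {α : Type*} [DecidableEq α] (t : ℕ) (ht : 2 ≤ t)
    (U : Fin t → Finset α)
    (hcard : ∀ i, t - 1 ≤ (U i).card)
    (hsdr : ¬ ∃ f : Fin t → α, Function.Injective f ∧ ∀ i, f i ∈ U i) :
    (∀ i j, U i = U j) ∧ ∀ i, (U i).card = t - 1 :=
  stmt8_general t U hcard hsdr
end

section
/- Let r, s ∈ ℕ be constants and set C = (s+1)^r. For any k < n, any ε ≥ (k/n)^r, and any family F ⊆ binom([n], k), there exist a set J ⊆ [n] of size at most C and a family J' ⊆ P(J) such that: (1) for every B ∈ J', the slice F_B^B is (s, ε·(n/k)^{|B|})-uncapturable; and (2) μ(F \ (J')^↑) ≤ Cε, where (J')^↑ is the family of all k-subsets of [n] containing some member of J'. -/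
/-!
Explore a tree of roots, starting at `∅`. At a root `B₀`, if the slice of `F` at `B₀` is
`(s, ε (n/k)^|B₀|)`-uncapturable, put `B₀` into `J'` and stop. Otherwise some `S` with `|S| ≤ s`
captures it: the members of `F` that miss `S` have measure at most `ε`, by the rescaling
`(n/k)^b C(n-b, k-b) ≤ C(n, k)`, and each other member contains some `x ∈ S`, so recurse at the
roots `B₀ ∪ {x}`, with `x` added to `J`. After `r` levels the whole remaining family has measure at
most `(k/n)^r ≤ ε`. The tree has branching at most `s` and depth at most `r`, so it has fewer than
`(s+1)^r` nodes, each of which leaves at most `ε C(n, k)` sets of `F` uncovered.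
-/

open Finset

theorem Finset.card_le_choose_of_subset {α : Type*} [DecidableEq α] {G : Finset (Finset α)}
    {B U : Finset α} {k : ℕ} (hBU : B ⊆ U) (hG : ∀ A ∈ G, A.card = k ∧ B ⊆ A ∧ A ⊆ U) :
    G.card ≤ (U.card - B.card).choose (k - B.card) := by
  have hsub : G ⊆ ((U \ B).powersetCard (k - B.card)).image (· ∪ B) := by
    intro A hA
    obtain ⟨hAk, hBA, hAU⟩ := hG A hA
    refine mem_image.2 ⟨A \ B, mem_powersetCard.2 ⟨sdiff_subset_sdiff hAU le_rfl, ?_⟩,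
      sdiff_union_of_subset hBA⟩
    rw [card_sdiff_of_subset hBA, hAk]
  calc G.card ≤ _ := card_le_card hsub
    _ ≤ _ := card_image_le
    _ = _ := by rw [card_powersetCard, card_sdiff_of_subset hBU]

theorem Nat.mul_choose_sub_succ_le {n k b : ℕ} (hbk : b < k) (hkn : k ≤ n) :
    n * (n - (b + 1)).choose (k - (b + 1)) ≤ k * (n - b).choose (k - b) := by
  obtain ⟨N, rfl⟩ : ∃ N, n = N + b + 1 := ⟨n - b - 1, by omega⟩
  obtain ⟨K, rfl⟩ : ∃ K, k = K + b + 1 := ⟨k - b - 1, by omega⟩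
  rw [show N + b + 1 - (b + 1) = N by omega, show K + b + 1 - (b + 1) = K by omega,
    show N + b + 1 - b = N + 1 by omega, show K + b + 1 - b = K + 1 by omega]
  have hKN : K ≤ N := by omega
  refine Nat.le_of_mul_le_mul_left ?_ K.succ_pos
  calc (K + 1) * ((N + b + 1) * N.choose K) = ((K + 1) * (N + b + 1)) * N.choose K := by ring
    _ ≤ ((K + b + 1) * (N + 1)) * N.choose K := Nat.mul_le_mul_right _ (by nlinarith)
    _ = (K + 1) * ((K + b + 1) * (N + 1).choose (K + 1)) := by
      rw [mul_assoc, Nat.add_one_mul_choose_eq]; ring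

theorem Nat.choose_sub_mul_pow_le_s13 {n k b : ℕ} (hbk : b ≤ k) (hkn : k ≤ n) :
    (n - b).choose (k - b) * n ^ b ≤ n.choose k * k ^ b := by
  induction b with
  | zero => simp
  | succ b ih =>
    calc (n - (b + 1)).choose (k - (b + 1)) * n ^ (b + 1)
        = n * (n - (b + 1)).choose (k - (b + 1)) * n ^ b := by ring
      _ ≤ k * (n - b).choose (k - b) * n ^ b :=
        Nat.mul_le_mul_right _ (mul_choose_sub_succ_le hbk hkn)
      _ = k * ((n - b).choose (k - b) * n ^ b) := by ring
      _ ≤ k * (n.choose k * k ^ b) := Nat.mul_le_mul_left _ (ih (by omega))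
      _ = n.choose k * k ^ (b + 1) := by ring

theorem div_pow_mul_choose_sub_le {n k b : ℕ} (hbk : b ≤ k) (hkn : k ≤ n) :
    ((n : ℝ) / k) ^ b * (n - b).choose (k - b) ≤ n.choose k := by
  rcases Nat.eq_zero_or_pos k with rfl | hk
  · obtain rfl : b = 0 := by omega
    simp
  · rw [div_pow, div_mul_eq_mul_div, div_le_iff₀ (by positivity)]
    exact_mod_cast (mul_comm _ _).trans_le (Nat.choose_sub_mul_pow_le_s13 hbk hkn)

theorem choose_sub_le_div_pow_mul_choose {n k b : ℕ} (hbk : b ≤ k) (hkn : k ≤ n) :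
    ((n - b).choose (k - b) : ℝ) ≤ ((k : ℝ) / n) ^ b * n.choose k := by
  rcases Nat.eq_zero_or_pos n with rfl | hn
  · obtain ⟨rfl, rfl⟩ : k = 0 ∧ b = 0 := by omega
    simp
  · rw [div_pow, div_mul_eq_mul_div, le_div_iff₀ (by positivity), mul_comm ((k : ℝ) ^ b)]
    exact_mod_cast Nat.choose_sub_mul_pow_le_s13 hbk hkn

section

variable {n : ℕ}

def sliceAvoid (F : Finset (Finset (Fin n))) (B S : Finset (Fin n)) : Finset (Finset (Fin n)) :=
  F.filter fun A => B ⊆ A ∧ A ∩ S = ∅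

/-- The measure of `sliceAvoid F B S` in `binom([n] \ (B ∪ S), k - |B|)`. -/
noncomputable def sliceDensity (k : ℕ) (F : Finset (Finset (Fin n))) (B S : Finset (Fin n)) : ℝ :=
  (sliceAvoid F B S).card / (n - B.card - S.card).choose (k - B.card)

def IsUncapturable (k s : ℕ) (δ : ℝ) (F : Finset (Finset (Fin n))) (B : Finset (Fin n)) : Prop :=
  ∀ S : Finset (Fin n), Disjoint S B → S.card ≤ s → δ < sliceDensity k F B S

/-- `F \ (J')^↑` in the notation of the paper. -/
def uncovered (F J' : Finset (Finset (Fin n))) : Finset (Finset (Fin n)) :=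
  F.filter fun A => ∀ B ∈ J', ¬ B ⊆ A

theorem card_sliceAvoid_le_choose {k : ℕ} {F : Finset (Finset (Fin n))} {B S : Finset (Fin n)}
    (hF : ∀ A ∈ F, A.card = k) (hSB : Disjoint S B) :
    (sliceAvoid F B S).card ≤ (n - B.card - S.card).choose (k - B.card) := by
  have h := card_le_choose_of_subset (G := sliceAvoid F B S)
      (subset_compl_iff_disjoint_left.2 hSB) fun A hA => by
    obtain ⟨hAF, hBA, hAS⟩ := mem_filter.1 hA
    exact ⟨hF A hAF, hBA, subset_compl_iff_disjoint_right.2 (disjoint_iff_inter_eq_empty.2 hAS)⟩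
  rwa [card_compl, Fintype.card_fin, Nat.sub_right_comm] at h

theorem sliceDensity_mul_choose {k : ℕ} {F : Finset (Finset (Fin n))} {B S : Finset (Fin n)}
    (hF : ∀ A ∈ F, A.card = k) (hSB : Disjoint S B) :
    sliceDensity k F B S * (n - B.card - S.card).choose (k - B.card) = (sliceAvoid F B S).card := by
  rcases Nat.eq_zero_or_pos ((n - B.card - S.card).choose (k - B.card)) with h | h
  · have := card_sliceAvoid_le_choose hF hSB
    simp_all
  · exact div_mul_cancel₀ _ (by positivity)

theorem card_sliceAvoid_le_of_sliceDensity_le {k : ℕ} {ε : ℝ} {F : Finset (Finset (Fin n))}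
    {B S : Finset (Fin n)} (hε : 0 ≤ ε) (hkn : k ≤ n) (hF : ∀ A ∈ F, A.card = k)
    (hSB : Disjoint S B) (hS : sliceDensity k F B S ≤ ε * ((n : ℝ) / k) ^ B.card) :
    ((sliceAvoid F B S).card : ℝ) ≤ ε * n.choose k := by
  rcases (sliceAvoid F B S).eq_empty_or_nonempty with h | ⟨A, hA⟩
  · rw [h, card_empty, Nat.cast_zero]
    positivity
  have hBk : B.card ≤ k := (hF A (mem_filter.1 hA).1) ▸ card_le_card (mem_filter.1 hA).2.1
  calc ((sliceAvoid F B S).card : ℝ)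
      = sliceDensity k F B S * (n - B.card - S.card).choose (k - B.card) :=
        (sliceDensity_mul_choose hF hSB).symm
    _ ≤ ε * ((n : ℝ) / k) ^ B.card * (n - B.card).choose (k - B.card) :=
        mul_le_mul hS (by exact_mod_cast Nat.choose_le_choose _ (Nat.sub_le _ _))
          (Nat.cast_nonneg _) (by positivity)
    _ ≤ ε * n.choose k := by
        rw [mul_assoc]
        exact mul_le_mul_of_nonneg_left (div_pow_mul_choose_sub_le hBk hkn) hε

theorem IsUncapturable.mono {k s : ℕ} {δ : ℝ} {F G : Finset (Finset (Fin n))}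
    {B : Finset (Fin n)} (hFG : F ⊆ G) (hF : IsUncapturable k s δ F B) :
    IsUncapturable k s δ G B := fun S hSB hS =>
  (hF S hSB hS).trans_le <| div_le_div_of_nonneg_right
    (by exact_mod_cast card_le_card (filter_subset_filter _ hFG)) (Nat.cast_nonneg _)

theorem uncovered_biUnion_subset (F : Finset (Finset (Fin n))) (S : Finset (Fin n))
    (J' : Fin n → Finset (Finset (Fin n))) :
    uncovered F (S.biUnion J') ⊆
      F.filter (fun A => A ∩ S = ∅) ∪ S.biUnion fun x => uncovered (F.filter (x ∈ ·)) (J' x) := by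
  intro A hA
  obtain ⟨hAF, hAJ⟩ := mem_filter.1 hA
  rcases (A ∩ S).eq_empty_or_nonempty with hAS | ⟨x, hx⟩
  · exact mem_union_left _ (mem_filter.2 ⟨hAF, hAS⟩)
  · obtain ⟨hxA, hxS⟩ := mem_inter.1 hx
    exact mem_union_right _ <| mem_biUnion.2 ⟨x, hxS, mem_filter.2
      ⟨mem_filter.2 ⟨hAF, hxA⟩, fun B hB => hAJ B (mem_biUnion.2 ⟨x, hxS, hB⟩)⟩⟩

structure IsJuntaApprox (k s r : ℕ) (ε : ℝ) (F : Finset (Finset (Fin n)))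
    (B₀ J : Finset (Fin n)) (J' : Finset (Finset (Fin n))) : Prop where
  card_lt : J.card < (s + 1) ^ r
  subset_union : ∀ B ∈ J', B ⊆ B₀ ∪ J
  isUncapturable : ∀ B ∈ J', IsUncapturable k s (ε * ((n : ℝ) / k) ^ B.card) F B
  card_uncovered_le : ((uncovered F J').card : ℝ) ≤ (s + 1) ^ r * ε * n.choose k

variable {k s : ℕ} {ε : ℝ} {F : Finset (Finset (Fin n))} {B₀ : Finset (Fin n)}

theorem isJuntaApprox_zero (hkn : k ≤ n) (hF : ∀ A ∈ F, A.card = k ∧ B₀ ⊆ A)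
    (hε : ((k : ℝ) / n) ^ B₀.card ≤ ε) : IsJuntaApprox k s 0 ε F B₀ ∅ ∅ where
  card_lt := by simp
  subset_union := by simp
  isUncapturable := by simp
  card_uncovered_le := by
    rcases F.eq_empty_or_nonempty with rfl | ⟨A, hA⟩
    · simp only [uncovered, filter_empty, card_empty, Nat.cast_zero, pow_zero, one_mul]
      exact mul_nonneg (hε.trans' (by positivity)) (Nat.cast_nonneg _)
    have hBk : B₀.card ≤ k := (hF A hA).1 ▸ card_le_card (hF A hA).2
    have hcount : F.card ≤ (n - B₀.card).choose (k - B₀.card) := by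
      simpa using card_le_choose_of_subset (subset_univ B₀) fun A hA =>
        ⟨(hF A hA).1, (hF A hA).2, subset_univ A⟩
    calc ((uncovered F ∅).card : ℝ) = F.card := by simp [uncovered]
      _ ≤ (n - B₀.card).choose (k - B₀.card) := by exact_mod_cast hcount
      _ ≤ ((k : ℝ) / n) ^ B₀.card * n.choose k := choose_sub_le_div_pow_mul_choose hBk hkn
      _ ≤ (s + 1) ^ 0 * ε * n.choose k := by rw [pow_zero, one_mul]; gcongr

theorem isJuntaApprox_singleton (hε : 0 ≤ ε) (hF : ∀ A ∈ F, B₀ ⊆ A)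
    (hB₀ : IsUncapturable k s (ε * ((n : ℝ) / k) ^ B₀.card) F B₀) (r : ℕ) :
    IsJuntaApprox k s r ε F B₀ ∅ {B₀} where
  card_lt := by simp
  subset_union := by simp
  isUncapturable := by simpa using hB₀
  card_uncovered_le := by
    have : uncovered F {B₀} = ∅ :=
      filter_eq_empty_iff.2 fun A hA h => h B₀ (mem_singleton_self _) (hF A hA)
    rw [this, card_empty, Nat.cast_zero]
    positivity

theorem isJuntaApprox_biUnion {m : ℕ} {S : Finset (Fin n)} {J : Fin n → Finset (Fin n)}
    {J' : Fin n → Finset (Finset (Fin n))} (hε : 0 ≤ ε) (hkn : k ≤ n)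
    (hF : ∀ A ∈ F, A.card = k ∧ B₀ ⊆ A) (hSB : Disjoint S B₀) (hS : S.card ≤ s)
    (hcap : sliceDensity k F B₀ S ≤ ε * ((n : ℝ) / k) ^ B₀.card)
    (hJ : ∀ x ∈ S, IsJuntaApprox k s m ε (F.filter (x ∈ ·)) (insert x B₀) (J x) (J' x)) :
    IsJuntaApprox k s (m + 1) ε F B₀ (S.biUnion fun x => insert x (J x)) (S.biUnion J') where
  card_lt := by
    calc (S.biUnion fun x => insert x (J x)).card ≤ ∑ x ∈ S, (insert x (J x)).card :=
          card_biUnion_le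
      _ ≤ ∑ _x ∈ S, (s + 1) ^ m := sum_le_sum fun x hx =>
          (card_insert_le _ _).trans (hJ x hx).card_lt
      _ = S.card * (s + 1) ^ m := by rw [sum_const, smul_eq_mul]
      _ < (s + 1) ^ (m + 1) := by rw [pow_succ, mul_comm]; gcongr; omega
  subset_union B hB := by
    obtain ⟨x, hx, hBx⟩ := mem_biUnion.1 hB
    calc B ⊆ insert x B₀ ∪ J x := (hJ x hx).subset_union B hBx
      _ = B₀ ∪ insert x (J x) := by rw [insert_union, union_insert]
      _ ⊆ B₀ ∪ S.biUnion fun x => insert x (J x) :=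
          union_subset_union_right (subset_biUnion_of_mem (fun x => insert x (J x)) hx)
  isUncapturable B hB := by
    obtain ⟨x, hx, hBx⟩ := mem_biUnion.1 hB
    exact ((hJ x hx).isUncapturable B hBx).mono (filter_subset _ _)
  card_uncovered_le := by
    have hslice : F.filter (fun A => A ∩ S = ∅) = sliceAvoid F B₀ S :=
      filter_congr fun A hA => (and_iff_right (hF A hA).2).symm
    have hcard := card_le_card (uncovered_biUnion_subset F S J')
    rw [hslice] at hcard
    calc ((uncovered F (S.biUnion J')).card : ℝ)
        ≤ (sliceAvoid F B₀ S).card + ∑ x ∈ S, ((uncovered (F.filter (x ∈ ·)) (J' x)).card : ℝ) := by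
          exact_mod_cast hcard.trans <|
            (card_union_le _ _).trans (Nat.add_le_add_left card_biUnion_le _)
      _ ≤ ε * n.choose k + ∑ _x ∈ S, (s + 1) ^ m * ε * n.choose k :=
          add_le_add
            (card_sliceAvoid_le_of_sliceDensity_le hε hkn (fun A hA => (hF A hA).1) hSB hcap)
            (sum_le_sum fun x hx => (hJ x hx).card_uncovered_le)
      _ = (1 + S.card * (s + 1) ^ m) * (ε * n.choose k) := by
          rw [sum_const, nsmul_eq_mul]; ring
      _ ≤ (1 + s * (s + 1) ^ m) * (ε * n.choose k) := by gcongr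
      _ ≤ (s + 1) ^ (m + 1) * ε * n.choose k := by
          rw [mul_assoc]
          refine mul_le_mul_of_nonneg_right ?_ (by positivity)
          have : (1 : ℝ) ≤ (s + 1) ^ m := one_le_pow₀ (by linarith)
          rw [pow_succ]
          nlinarith

/-- Passing from the root `B₀` to `insert x B₀` lowers `r` by one, so `r + |B₀|` is invariant. -/
theorem exists_isJuntaApprox (hkn : k ≤ n) (r : ℕ) (hF : ∀ A ∈ F, A.card = k ∧ B₀ ⊆ A)
    (hε : ((k : ℝ) / n) ^ (r + B₀.card) ≤ ε) : ∃ J J', IsJuntaApprox k s r ε F B₀ J J' := by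
  have hε₀ : 0 ≤ ε := hε.trans' (by positivity)
  induction r generalizing B₀ F with
  | zero => exact ⟨∅, ∅, isJuntaApprox_zero hkn hF (by simpa using hε)⟩
  | succ m ih =>
    by_cases hB₀ : IsUncapturable k s (ε * ((n : ℝ) / k) ^ B₀.card) F B₀
    · exact ⟨∅, {B₀}, isJuntaApprox_singleton hε₀ (fun A hA => (hF A hA).2) hB₀ _⟩
    obtain ⟨S, hSB, hS, hcap⟩ : ∃ S, Disjoint S B₀ ∧ S.card ≤ s ∧
        sliceDensity k F B₀ S ≤ ε * ((n : ℝ) / k) ^ B₀.card := by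
      simpa [IsUncapturable] using hB₀
    have hx : ∀ x ∈ S, ∃ J J', IsJuntaApprox k s m ε (F.filter (x ∈ ·)) (insert x B₀) J J' := by
      intro x hx
      refine ih (B₀ := insert x B₀) (fun A hA => ?_) ?_
      · obtain ⟨hAF, hxA⟩ := mem_filter.1 hA
        exact ⟨(hF A hAF).1, insert_subset hxA (hF A hAF).2⟩
      · rwa [card_insert_of_notMem (disjoint_left.1 hSB hx), ← add_assoc, add_right_comm]
    choose! J J' hJ using hx
    exact ⟨_, _, isJuntaApprox_biUnion hε₀ hkn hF hSB hS hcap hJ⟩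

end

open Classical in
theorem stmt13 (r s : ℕ) (n k : ℕ) (ε : ℝ) (F : Finset (Finset (Fin n)))
    (hkn : k < n) (hε : ((k : ℝ) / n) ^ r ≤ ε) (hF : ∀ A ∈ F, A.card = k) :
    ∃ (J : Finset (Fin n)) (J' : Finset (Finset (Fin n))),
      J.card ≤ (s + 1) ^ r ∧ (∀ B ∈ J', B ⊆ J) ∧
      (∀ B ∈ J', ∀ S : Finset (Fin n), Disjoint S B → S.card ≤ s →
        ((F.filter (fun A => B ⊆ A ∧ A ∩ S = ∅)).card : ℝ)
            / ((n - B.card - S.card).choose (k - B.card)) >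
          ε * ((n : ℝ) / k) ^ B.card) ∧
      ((F.filter (fun A => ∀ B ∈ J', ¬ B ⊆ A)).card : ℝ) / (n.choose k) ≤
        ((s + 1) ^ r : ℝ) * ε := by
  obtain ⟨J, J', h⟩ := exists_isJuntaApprox (s := s) (B₀ := ∅) hkn.le r
    (fun A hA => ⟨hF A hA, empty_subset A⟩) (by simpa using hε)
  refine ⟨J, J', h.card_lt.le, fun B hB => by simpa using h.subset_union B hB,
    h.isUncapturable, ?_⟩
  rw [div_le_iff₀ (by exact_mod_cast Nat.choose_pos hkn.le)]
  exact h.card_uncovered_le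
end

section
/- Let s, n ∈ ℕ and suppose F₁, …, F_s ⊆ P([n]) are s-wise cross intersecting, i.e., for all A₁ ∈ F₁, …, A_s ∈ F_s, A₁ ∩ ⋯ ∩ A_s ≠ ∅. Then (1/s)·Σ_{i=1}^s μ_{(s−1)/s}(F_i) ≤ (s−1)/s. -/
/-!
Colour `Fin n` with `s` colours uniformly at random. For each colour `i`, the set of points not
coloured `i` has law `μ_{(s-1)/s}`, so `s ^ n * μ_{(s-1)/s}(F i)` counts the colourings `f` with
`{x | f x ≠ i} ∈ F i`. These `s` sets have empty common intersection (no point avoids its own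
colour), so cross intersection allows at most `s - 1` of them to lie in their families; summing
over colourings gives `∑ i, μ_{(s-1)/s}(F i) ≤ s - 1`.
-/

open Finset

variable {α ι : Type*}

def fiberCompl [Fintype α] [DecidableEq ι] (f : α → ι) (c : ι) : Finset α := {x | f x ≠ c}

theorem mem_fiberCompl [Fintype α] [DecidableEq ι] {f : α → ι} {c : ι} {x : α} :
    x ∈ fiberCompl f c ↔ f x ≠ c := by
  simp [fiberCompl]

theorem card_fiberCompl_eq [Fintype α] [DecidableEq α] [Fintype ι] [DecidableEq ι]
    (c : ι) (A : Finset α) :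
    #{f : α → ι | fiberCompl f c = A} = (Fintype.card ι - 1) ^ #A := by
  have hpi : ({f : α → ι | fiberCompl f c = A} : Finset (α → ι)) =
      Fintype.piFinset fun x => if x ∈ A then univ.erase c else {c} := by
    ext f
    simp only [mem_filter, mem_univ, true_and, Fintype.mem_piFinset, Finset.ext_iff,
      mem_fiberCompl]
    refine forall_congr' fun x => ?_
    split_ifs with hx <;> simp [hx]
  rw [hpi, Fintype.card_piFinset]
  simp only [apply_ite card, card_erase_of_mem (mem_univ c), card_univ, card_singleton]
  rw [prod_ite_mem, prod_const, univ_inter]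

theorem card_filter_fiberCompl_mem_lt [Fintype α] [DecidableEq α] [Fintype ι] [DecidableEq ι]
    {F : ι → Finset (Finset α)}
    (hcross : ∀ A : ι → Finset α, (∀ i, A i ∈ F i) → (univ.inf A).Nonempty) (f : α → ι) :
    #{i | fiberCompl f i ∈ F i} < Fintype.card ι := by
  refine (card_lt_iff_ne_univ _).mpr fun hall => ?_
  have hmem (i : ι) : fiberCompl f i ∈ F i := filter_eq_self.mp hall i (mem_univ i)
  obtain ⟨x, hx⟩ := hcross _ hmem
  exact mem_fiberCompl.mp (inf_le (f := fiberCompl f) (mem_univ (f x)) hx) rfl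

theorem sum_card_filter_fiberCompl_mem_le [Fintype α] [DecidableEq α] [Fintype ι] [DecidableEq ι]
    {F : ι → Finset (Finset α)}
    (hcross : ∀ A : ι → Finset α, (∀ i, A i ∈ F i) → (univ.inf A).Nonempty) :
    ∑ i, #{f : α → ι | fiberCompl f i ∈ F i} ≤
      (Fintype.card ι - 1) * Fintype.card ι ^ Fintype.card α := by
  calc ∑ i, #{f : α → ι | fiberCompl f i ∈ F i}
      = ∑ f : α → ι, #{i | fiberCompl f i ∈ F i} := by
        simp only [card_filter]; exact sum_comm
    _ ≤ ∑ _f : α → ι, (Fintype.card ι - 1) :=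
        sum_le_sum fun f _ => Nat.le_sub_one_of_lt (card_filter_fiberCompl_mem_lt hcross f)
    _ = _ := by simp [mul_comm]

theorem biasedMu_mul_pow_eq_sum {n : ℕ} {q : ℝ} (hq : q ≠ 0) (F : Finset (Finset (Fin n))) :
    biasedMu n ((q - 1) / q) F * q ^ n = ∑ A ∈ F, (q - 1) ^ #A := by
  rw [biasedMu, sum_mul]
  refine sum_congr rfl fun A _ => ?_
  have hA : #A ≤ n := by simpa using card_le_univ A
  have hsplit : q ^ n = q ^ #A * q ^ (n - #A) := by rw [← pow_add, Nat.add_sub_cancel' hA]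
  rw [show 1 - (q - 1) / q = q⁻¹ by field_simp; ring, hsplit, div_pow, inv_pow]
  field_simp

theorem biasedMu_mul_pow_eq_card {n : ℕ} [Fintype ι] [DecidableEq ι] (c : ι)
    (F : Finset (Finset (Fin n))) :
    biasedMu n ((Fintype.card ι - 1) / Fintype.card ι) F * Fintype.card ι ^ n =
      #{f : Fin n → ι | fiberCompl f c ∈ F} := by
  have hq : (Fintype.card ι : ℝ) ≠ 0 := by exact_mod_cast (Fintype.card_pos_iff.mpr ⟨c⟩).ne'
  rw [biasedMu_mul_pow_eq_sum hq, ← sum_card_fiberwise_eq_card_filter]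
  push_cast
  refine sum_congr rfl fun A _ => ?_
  rw [card_fiberCompl_eq, Nat.cast_pow, Nat.cast_pred (Fintype.card_pos_iff.mpr ⟨c⟩)]

theorem stmt15 (n s : ℕ) (F : Fin s → Finset (Finset (Fin n)))
    (hcross : ∀ A : Fin s → Finset (Fin n), (∀ i, A i ∈ F i) →
      (Finset.univ.inf A).Nonempty) :
    (1 / s : ℝ) * ∑ i, biasedMu n (((s : ℝ) - 1) / s) (F i) ≤ ((s : ℝ) - 1) / s := by
  rcases Nat.eq_zero_or_pos s with rfl | hs
  · simp
  have hcount := sum_card_filter_fiberCompl_mem_le hcross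
  simp only [Fintype.card_fin] at hcount
  have hsum : (∑ i, biasedMu n (((s : ℝ) - 1) / s) (F i)) * s ^ n ≤ (s - 1) * s ^ n := by
    have hcard (i : Fin s) : biasedMu n (((s : ℝ) - 1) / s) (F i) * s ^ n =
        #{f : Fin n → Fin s | fiberCompl f i ∈ F i} := by
      simpa using biasedMu_mul_pow_eq_card i (F i)
    rw [sum_mul, sum_congr rfl fun i _ => hcard i, ← Nat.cast_pred hs]
    exact_mod_cast hcount
  have hbound : ∑ i, biasedMu n (((s : ℝ) - 1) / s) (F i) ≤ s - 1 :=
    le_of_mul_le_mul_right hsum (by positivity)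
  rw [one_div_mul_eq_div]
  gcongr
end

section
/- For any constants ζ > 0 and s ∈ ℕ there exists n₀(ζ, s) such that the following holds for n > n₀. Let ζ ≤ k/n ≤ 1 − ζ, let S ⊆ [n] be a set of size s, let i ∈ S, and let ε > 0. If F ⊆ binom([n], k) satisfies μ(F) ≥ k/n − ε and μ(F_{{i}}^∅) ≤ ε, then μ(F_S^{{i}}) ≥ 1 − O_{ζ,s}(ε). -/
/-! Every `A ∈ F` containing `i` either meets `S` exactly in `i` or is one of the
`C(n-1,k-1) - C(n-s,k-1)` `k`-sets containing `i` that meet `S \ {i}`. As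
`(k/n) C(n,k) = C(n-1,k-1)`, the hypotheses say that `F` misses at most `ε C(n,k)` of the
`k`-sets containing `i` and has at most `ε C(n-1,k)` members avoiding `i`, so at least
`C(n-s,k-1) - 2ε C(n,k)` sets lie in `F_S^{i}`. For `ζn ≤ k ≤ (1-ζ)n` and `n > 2s/ζ`, the
ratio `C(n,k) / C(n-s,k)` is a product of `s` factors `(n-t)/(n-t-k) ≤ 2/ζ`, and
`C(n-s,k) / C(n-s,k-1) ≤ n/k ≤ 1/ζ`; hence `2 C(n,k) ≤ (2/ζ)^(s+1) C(n-s,k-1)`. -/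

open Finset

namespace Nat

theorem choose_mul_le_mul_choose_pred (m k : ℕ) : m.choose k * k ≤ m * m.choose (k - 1) := by
  cases k with
  | zero => simp
  | succ k =>
    rw [choose_succ_right_eq, Nat.add_sub_cancel, mul_comm m]
    exact Nat.mul_le_mul_left _ (Nat.sub_le m k)

theorem choose_mul_pow_le_pow_mul_choose (m r j : ℕ) :
    m.choose r * (m - r - j) ^ j ≤ m ^ j * (m - j).choose r := by
  induction j with
  | zero => simp
  | succ j ih =>
    rcases Nat.eq_zero_or_pos (m - r - (j + 1)) with h | h
    · simp [h]
    have hstep : (m - j).choose r * (m - j - r) = (m - (j + 1)).choose r * (m - j) := by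
      have := choose_mul_succ_eq (m - (j + 1)) r
      rw [show m - (j + 1) + 1 = m - j by omega] at this
      exact this.symm
    calc m.choose r * (m - r - (j + 1)) ^ (j + 1)
        ≤ m.choose r * (m - r - j) ^ j * (m - j - r) := by
          rw [pow_succ, ← mul_assoc]
          exact Nat.mul_le_mul (Nat.mul_le_mul_left _ (Nat.pow_le_pow_left (by omega) j))
            (by omega)
      _ ≤ m ^ j * (m - j).choose r * (m - j - r) := by gcongr
      _ = m ^ j * (m - (j + 1)).choose r * (m - j) := by rw [mul_assoc, hstep, mul_assoc]
      _ ≤ m ^ (j + 1) * (m - (j + 1)).choose r := by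
          rw [pow_succ, mul_right_comm]
          gcongr
          omega

end Nat

theorem pow_mul_choose_le_two_pow_mul_choose_sub {ζ : ℝ} {n k s : ℕ} (hζ : 0 ≤ ζ)
    (hn : 0 < n) (hk : ζ * n ≤ k) (hks : k + s ≤ n)
    (hgap : ζ * n ≤ 2 * ((n : ℝ) - k - s)) :
    ζ ^ (s + 1) * n.choose k ≤ 2 ^ s * (n - s).choose (k - 1) := by
  have hnat : n.choose k * (n - k - s) ^ s * k ≤ n ^ (s + 1) * (n - s).choose (k - 1) :=
    calc n.choose k * (n - k - s) ^ s * k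
        ≤ n ^ s * (n - s).choose k * k :=
          Nat.mul_le_mul_right k (Nat.choose_mul_pow_le_pow_mul_choose n k s)
      _ ≤ n ^ s * ((n - s) * (n - s).choose (k - 1)) := by
          rw [mul_assoc]; exact Nat.mul_le_mul_left _ (Nat.choose_mul_le_mul_choose_pred _ _)
      _ ≤ n ^ (s + 1) * (n - s).choose (k - 1) := by
          rw [pow_succ, mul_assoc]
          exact Nat.mul_le_mul_left _ (Nat.mul_le_mul_right _ (Nat.sub_le n s))
  set g : ℝ := n - k - s
  have hreal : (n.choose k : ℝ) * g ^ s * k ≤ n ^ (s + 1) * (n - s).choose (k - 1) := by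
    have hcast : ((n - k - s : ℕ) : ℝ) = g := by
      rw [Nat.cast_sub (by omega), Nat.cast_sub (by omega)]
    rw [← hcast]
    exact_mod_cast hnat
  clear_value g
  have hζn : 0 ≤ ζ * n := by positivity
  refine le_of_mul_le_mul_left ?_ (by positivity : (0 : ℝ) < n ^ (s + 1))
  calc (n : ℝ) ^ (s + 1) * (ζ ^ (s + 1) * n.choose k)
      = (ζ * n) ^ s * (ζ * n) * n.choose k := by ring
    _ ≤ (2 * g) ^ s * k * n.choose k := by
      have hpow := pow_le_pow_left₀ hζn hgap s
      exact mul_le_mul_of_nonneg_right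
        (mul_le_mul hpow hk hζn (pow_nonneg (hζn.trans hgap) s)) (Nat.cast_nonneg _)
    _ = 2 ^ s * ((n.choose k : ℝ) * g ^ s * k) := by ring
    _ ≤ 2 ^ s * (n ^ (s + 1) * (n - s).choose (k - 1)) := by gcongr
    _ = n ^ (s + 1) * (2 ^ s * (n - s).choose (k - 1)) := by ring

section
variable {α : Type*} [DecidableEq α]

theorem mem_of_inter_eq_singleton {A S : Finset α} {i : α} (h : A ∩ S = {i}) : i ∈ A :=
  (mem_inter.mp (h ▸ mem_singleton_self i)).1

variable [Fintype α]

theorem card_filter_inter_eq_singleton (k : ℕ) {S : Finset α} {i : α} (hi : i ∈ S) :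
    #{A ∈ powersetCard (k + 1) (univ : Finset α) | A ∩ S = {i}} =
      (Fintype.card α - #S).choose k := by
  rw [← card_univ_sdiff, ← card_powersetCard]
  refine card_nbij' (·.erase i) (insert i)
    (fun A hA => ?_) (fun B hB => ?_) (fun A hA => ?_) (fun B hB => ?_)
  · simp only [coe_filter, mem_powersetCard_univ, Set.mem_ofPred_eq] at hA
    have := mem_of_inter_eq_singleton hA.2
    simp only [mem_coe, mem_powersetCard, card_erase_of_mem this, hA.1]
    refine ⟨fun x hx => mem_sdiff.mpr ⟨mem_univ x, fun hxS => ?_⟩, rfl⟩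
    have hx' := mem_inter.mpr ⟨(mem_erase.mp hx).2, hxS⟩
    rw [hA.2, mem_singleton] at hx'
    exact (mem_erase.mp hx).1 hx'
  · simp only [mem_coe, mem_powersetCard] at hB
    have : i ∉ B := fun h => (mem_sdiff.mp (hB.1 h)).2 hi
    simp only [coe_filter, mem_powersetCard_univ, Set.mem_ofPred_eq, card_insert_of_notMem this,
      hB.2, true_and]
    ext x
    have := @hB.1 x
    grind
  · simp only [coe_filter, mem_powersetCard_univ, Set.mem_ofPred_eq] at hA
    exact insert_erase (mem_of_inter_eq_singleton hA.2)
  · simp only [mem_coe, mem_powersetCard] at hB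
    exact erase_insert fun h => (mem_sdiff.mp (hB.1 h)).2 hi

theorem card_add_choose_le_card_filter_add {k : ℕ} {F : Finset (Finset α)}
    (hF : ∀ A ∈ F, #A = k + 1) {S : Finset α} {i : α} (hi : i ∈ S) :
    #F + (Fintype.card α - #S).choose k ≤
      #{A ∈ F | A ∩ S = {i}} + #{A ∈ F | i ∉ A} + (Fintype.card α - 1).choose k := by
  have hY := card_filter_inter_eq_singleton k hi
  have hZ := card_filter_inter_eq_singleton k (mem_singleton_self i)
  rw [card_singleton] at hZ
  set U := powersetCard (k + 1) (univ : Finset α)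
  have hFU : ∀ A ∈ F, A ∈ U := fun A hA => mem_powersetCard_univ.mpr (hF A hA)
  have hsplit : #{A ∈ F | i ∈ A} + #{A ∈ F | i ∉ A} = #F :=
    card_filter_add_card_filter_not _
  have hinter : {A ∈ F | i ∈ A} ∩ {A ∈ U | A ∩ S = {i}} = {A ∈ F | A ∩ S = {i}} := by
    ext A
    simp only [mem_inter, mem_filter]
    exact ⟨fun h => ⟨h.1.1, h.2.2⟩,
      fun h => ⟨⟨h.1, mem_of_inter_eq_singleton h.2⟩, hFU A h.1, h.2⟩⟩
  have hunion :
      {A ∈ F | i ∈ A} ∪ {A ∈ U | A ∩ S = {i}} ⊆ {A ∈ U | A ∩ {i} = {i}} := by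
    intro A hA
    simp only [mem_union, mem_filter] at hA ⊢
    rcases hA with ⟨hAF, hiA⟩ | ⟨hAU, hAS⟩
    · exact ⟨hFU A hAF, inter_singleton_of_mem hiA⟩
    · exact ⟨hAU, inter_singleton_of_mem (mem_of_inter_eq_singleton hAS)⟩
  have hcard := card_union_add_card_inter {A ∈ F | i ∈ A} {A ∈ U | A ∩ S = {i}}
  rw [hinter, hY] at hcard
  have := card_le_card hunion
  rw [hZ] at this
  omega

theorem choose_sub_two_mul_le_card_filter_inter_eq_singleton [Nonempty α] {k : ℕ} (hk : 0 < k)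
    {ε : ℝ} (hε : 0 ≤ ε) {F : Finset (Finset α)} (hF : ∀ A ∈ F, #A = k)
    {S : Finset α} {i : α} (hi : i ∈ S)
    (hμF : ((k : ℝ) / Fintype.card α - ε) * (Fintype.card α).choose k ≤ #F)
    (hμE : (#{A ∈ F | i ∉ A} : ℝ) ≤ ε * (Fintype.card α - 1).choose k) :
    ((Fintype.card α - #S).choose (k - 1) : ℝ) - 2 * ε * (Fintype.card α).choose k ≤
      #{A ∈ F | A ∩ S = {i}} := by
  set n := Fintype.card α
  have hn : 0 < n := Fintype.card_pos
  have hcount : (#F : ℝ) + (n - #S).choose (k - 1) ≤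
      #{A ∈ F | A ∩ S = {i}} + #{A ∈ F | i ∉ A} + (n - 1).choose (k - 1) := by
    exact_mod_cast card_add_choose_le_card_filter_add
      (fun A hA => (hF A hA).trans (Nat.succ_pred_eq_of_pos hk).symm) hi
  have hpascal : (k : ℝ) / n * n.choose k = (n - 1).choose (k - 1) := by
    have := Nat.add_one_mul_choose_eq (n - 1) (k - 1)
    rw [Nat.sub_add_cancel hn, Nat.sub_add_cancel hk] at this
    rw [div_mul_eq_mul_div, div_eq_iff (Nat.cast_pos.mpr hn).ne']
    norm_cast
    linarith
  have hmono : ((n - 1).choose k : ℝ) ≤ n.choose k := by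
    exact_mod_cast Nat.choose_le_choose k (Nat.sub_le n 1)
  linarith [mul_le_mul_of_nonneg_left hmono hε]

end

open Classical in
theorem stmt16 (ζ : ℝ) (hζ : 0 < ζ) (s : ℕ) :
    ∃ (n₀ : ℕ) (K : ℝ), 0 < K ∧
      ∀ (n k : ℕ) (S : Finset (Fin n)) (i : Fin n) (ε : ℝ) (F : Finset (Finset (Fin n))),
        n₀ < n → ζ ≤ (k : ℝ) / n → (k : ℝ) / n ≤ 1 - ζ →
        S.card = s → i ∈ S → 0 < ε →
        (∀ A ∈ F, A.card = k) →
        (F.card : ℝ) / (n.choose k) ≥ (k : ℝ) / n - ε →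
        ((F.filter (fun A => i ∉ A)).card : ℝ) / ((n - 1).choose k) ≤ ε →
        ((F.filter (fun A => A ∩ S = {i})).card : ℝ) / ((n - s).choose (k - 1)) ≥
          1 - K * ε := by
  refine ⟨⌈2 * s / ζ⌉₊, 2 * 2 ^ s / ζ ^ (s + 1), by positivity, ?_⟩
  intro n k S i ε F hn hk₁ hk₂ hS hi hε hF hμF hμE
  have hn₀ : 0 < n := (Nat.zero_le _).trans_lt hn
  have hnR : (0 : ℝ) < n := Nat.cast_pos.mpr hn₀
  have hsn : 2 * s < ζ * n := by
    have := (Nat.le_ceil (2 * s / ζ : ℝ)).trans_lt (Nat.cast_lt.mpr hn)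
    rw [div_lt_iff₀ hζ] at this
    linarith
  have hk : ζ * n ≤ k := (le_div_iff₀ hnR).mp hk₁
  have hk' : (k : ℝ) ≤ (1 - ζ) * n := (div_le_iff₀ hnR).mp hk₂
  have hk₀ : 0 < k := by
    exact_mod_cast (show (0 : ℝ) < k by linarith [(Nat.cast_nonneg s : (0 : ℝ) ≤ s)])
  have hks : k + s ≤ n := by exact_mod_cast (show (k + s : ℝ) ≤ n by linarith)
  have hkn : k < n := by exact_mod_cast (show (k : ℝ) < n by linarith)
  have : Nonempty (Fin n) := Fin.pos_iff_nonempty.mp hn₀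
  have hG := choose_sub_two_mul_le_card_filter_inter_eq_singleton hk₀ hε.le hF hi
    (by rw [Fintype.card_fin]; exact (le_div_iff₀ (mod_cast Nat.choose_pos hkn.le)).mp hμF)
    (by rw [Fintype.card_fin]; exact (div_le_iff₀ (mod_cast Nat.choose_pos (by omega))).mp hμE)
  rw [Fintype.card_fin, hS] at hG
  have hK : 2 * (n.choose k : ℝ) ≤ 2 * 2 ^ s / ζ ^ (s + 1) * (n - s).choose (k - 1) := by
    rw [div_mul_eq_mul_div, le_div_iff₀ (by positivity)]
    linarith [pow_mul_choose_le_two_pow_mul_choose_sub hζ.le hn₀ hk hks (by linarith)]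
  rw [ge_iff_le, le_div_iff₀ (by exact_mod_cast Nat.choose_pos (by omega))]
  linarith [mul_le_mul_of_nonneg_left hK hε.le]
end

section
/- For any d ∈ ℕ and 0 < ζ < 1 there exist constants ε₀, n₀ depending only on d and ζ such that the following holds. Let n > n₀, let k₁, k₂ ∈ (ζn, (d−1)n/d + d + 1), and let F₁, …, F_d ⊆ binom([n], k₁) and F_{d+1} ⊆ binom([n], k₂) be families that are cross free of a d-simplex. If μ(F_i) ≥ 1 − ε₀ for all i ∈ [d], then F_{d+1} is empty. -/
/-!
Let `B ∈ F (last d)`. Pick `Y = {y 0, …, y (d-1)} ⊆ B` and a set `T` of `d(d+1)` points outside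
`B`, and let `V` be the rest of the ground set. If `U 0, …, U (d-1) ⊆ V` have empty intersection,
then the sets `(Y \ {y i}) ∪ T ∪ U i` together with `B` form a `d`-simplex: `y i` lies in every
set but the `i`-th one, `T` in every set but `B`, and no point lies in all of them.

So it suffices to find, for each `i`, a set `U i` in the link of `F i` at `(Y \ {y i}) ∪ T`, with
empty total intersection. Fixed sets `S i ⊆ V` of the right size with empty intersection exist
as soon as `|V| ≤ d (|V| - |U i|)`, which the window `k₁ < (d-1)n/d + d + 1` guarantees once
`|T| = d(d+1)`. A uniformly random permutation of `V` then moves every `S i` into its link at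
once by a union bound: each link misses at most `ε₀ C(n, k₁)` sets, while removing the
`d(d+2)` points of `Y ∪ T` one at a time costs at most a factor `γ = ζ / (2(d+1))` each, so
`C(|V|, |U i|) ≥ γ ^ (d(d+2)) C(n, k₁)`; hence `ε₀ = γ ^ (d(d+2)) / (d+1)`.
-/

open Finset

/-- `A` is a `d`-simplex: `d+1` sets with empty total intersection such that
the intersection of any `d` of them is nonempty. -/
def IsSimplex (n d : ℕ) (A : Fin (d + 1) → Finset (Fin n)) : Prop :=
  Finset.univ.inf A = ∅ ∧ ∀ i, ((Finset.univ.erase i).inf A).Nonempty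

open scoped Pointwise

theorem MulAction.card_filter_smul_eq_eq_of_smul_eq {G X : Type*} [Group G] [Fintype G]
    [MulAction G X] [DecidableEq X] (a : X) {b c : X} {g₀ : G} (h : g₀ • b = c) :
    #{g : G | g • a = b} = #{g : G | g • a = c} :=
  card_nbij' (g₀ * ·) (g₀⁻¹ * ·) (by intro g; simp_all [mul_smul])
    (by intro g; simp_all [mul_smul, inv_smul_eq_iff]) (by intro g _; simp) (by intro g _; simp)

theorem Equiv.Perm.exists_smul_finset_eq {α : Type*} [DecidableEq α] {s t : Finset α}
    (h : #s = #t) : ∃ π : Equiv.Perm α, π • s = t := by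
  have := Set.powersetCard.isPretransitive (α := α) (n := #t)
  obtain ⟨π, hπ⟩ := MulAction.exists_smul_eq (Equiv.Perm α)
    (⟨s, h⟩ : Set.powersetCard α #t) ⟨t, rfl⟩
  exact ⟨π, congrArg Subtype.val hπ⟩

theorem Fin.exists_card_eq_inf_eq_empty {m d k : ℕ} (hk : k ≤ m) (hcover : m ≤ d * (m - k)) :
    ∃ S : Fin d → Finset (Fin m), (∀ i, #(S i) = k) ∧ univ.inf S = ∅ := by
  set q := m - k with hq
  -- `S i` is the complement of the window `[a i, a i + q)`; these windows cover `[0, m)`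
  -- because `m ≤ d q`
  set a : Fin d → ℕ := fun i => min (i * q) (m - q)
  have ha : ∀ i, ∀ j ∈ Ico (a i) (a i + q), j < m := fun i j hj => by
    have : a i ≤ m - q := min_le_right _ _
    simp only [mem_Ico] at hj; omega
  refine ⟨fun i => ((Ico (a i) (a i + q)).attachFin (ha i))ᶜ, fun i => ?_, ?_⟩
  · rw [card_compl, card_attachFin, Nat.card_Ico, Fintype.card_fin]; omega
  · refine eq_empty_of_forall_notMem fun x hx => ?_
    have hq0 : 0 < q := Nat.pos_of_ne_zero fun h => by
      rw [h, mul_zero] at hcover; exact absurd x.2 (by omega)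
    have hi : (x : ℕ) / q < d := Nat.div_lt_of_lt_mul (by linarith [x.2])
    have := mem_inf.1 hx ⟨_, hi⟩ (mem_univ _)
    simp only [mem_compl, mem_attachFin, mem_Ico, a, not_and, not_lt] at this
    have h1 := Nat.div_mul_le_self x q
    have h2 := Nat.lt_div_mul_add (a := (x : ℕ)) hq0
    omega

section Fintype

variable {α : Type*} [Fintype α] [DecidableEq α]

theorem card_filter_perm_smul_mem_mul_choose (S : Finset α) (X : Finset (Finset α))
    (hX : ∀ U ∈ X, #U = #S) :
    #{π : Equiv.Perm α | π • S ∈ X} * (Fintype.card α).choose #S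
      = #X * (Fintype.card α).factorial := by
  set f := #{π : Equiv.Perm α | π • S = S}
  have hfiber : ∀ U : Finset α, #U = #S → #{π : Equiv.Perm α | π • S = U} = f := by
    intro U hU
    obtain ⟨ρ, hρ⟩ := Equiv.Perm.exists_smul_finset_eq hU.symm
    exact (MulAction.card_filter_smul_eq_eq_of_smul_eq S hρ).symm
  have hX' : #{π : Equiv.Perm α | π • S ∈ X} = #X * f := by
    rw [card_eq_sum_card_fiberwise (s := {π : Equiv.Perm α | π • S ∈ X}) (t := X)
      (f := (· • S)) fun π hπ => by simpa using hπ,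
      sum_congr rfl fun U hU => ?_, sum_const, smul_eq_mul]
    rw [filter_filter, ← hfiber U (hX U hU)]
    congr 1; ext π
    simp only [mem_filter, mem_univ, true_and, and_iff_right_iff_imp]
    rintro rfl; exact hU
  have hall : (Fintype.card α).factorial = (Fintype.card α).choose #S * f := by
    rw [← Fintype.card_perm, ← card_univ,
      card_eq_sum_card_fiberwise (t := powersetCard #S univ) (f := (· • S)) (fun π _ => by simp),
      sum_congr rfl fun U hU => hfiber U (mem_powersetCard_univ.1 hU), sum_const, smul_eq_mul,
      card_powersetCard, card_univ]
  rw [hX', hall]; ring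

theorem exists_perm_forall_smul_mem {ι : Type*} [Fintype ι] {k : ℕ} (S : ι → Finset α)
    (hS : ∀ i, #(S i) = k) (G : ι → Finset (Finset α))
    (h : ∑ i, #{U ∈ powersetCard k univ | U ∉ G i} < (Fintype.card α).choose k) :
    ∃ π : Equiv.Perm α, ∀ i, π • S i ∈ G i := by
  by_contra! hbad
  set M : ι → Finset (Finset α) := fun i => {U ∈ powersetCard k univ | U ∉ G i}
  have hcover : (univ : Finset (Equiv.Perm α)) ⊆
      univ.biUnion fun i => {π : Equiv.Perm α | π • S i ∈ M i} := by
    intro π _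
    obtain ⟨i, hi⟩ := hbad π
    simpa [M, hS, hi] using ⟨i, hi⟩
  have hcount : ∀ i, #{π : Equiv.Perm α | π • S i ∈ M i} * (Fintype.card α).choose k
      = #(M i) * (Fintype.card α).factorial := fun i => by
    simpa [hS i] using card_filter_perm_smul_mem_mul_choose (S i) (M i)
      fun U hU => by simp_all [M]
  refine lt_irrefl ((Fintype.card α).factorial * (Fintype.card α).choose k) ?_
  calc (Fintype.card α).factorial * (Fintype.card α).choose k
      ≤ (∑ i, #{π : Equiv.Perm α | π • S i ∈ M i}) * (Fintype.card α).choose k := by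
        gcongr
        rw [← Fintype.card_perm, ← card_univ]
        exact (card_le_card hcover).trans card_biUnion_le
    _ = (∑ i, #(M i)) * (Fintype.card α).factorial := by simp only [sum_mul, hcount]
    _ < (Fintype.card α).choose k * (Fintype.card α).factorial := by gcongr
    _ = (Fintype.card α).factorial * (Fintype.card α).choose k := mul_comm _ _

theorem exists_card_eq_inf_eq_empty {d k : ℕ} (hk : k ≤ Fintype.card α)
    (hcover : Fintype.card α ≤ d * (Fintype.card α - k)) :
    ∃ S : Fin d → Finset α, (∀ i, #(S i) = k) ∧ univ.inf S = ∅ := by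
  obtain ⟨S, hS, hinf⟩ := Fin.exists_card_eq_inf_eq_empty hk hcover
  set e := (Fintype.equivFin α).symm
  refine ⟨fun i => (S i).map e.toEmbedding, fun i => by simp [hS], ?_⟩
  refine eq_empty_of_forall_notMem fun x hx => ?_
  have : e.symm x ∈ univ.inf S := mem_inf.2 fun i _ => by
    simpa [mem_map_equiv] using mem_inf.1 hx i (mem_univ i)
  simp [hinf] at this

theorem exists_forall_mem_inf_eq_empty {d k : ℕ} (G : Fin d → Finset (Finset α))
    (hk : k ≤ Fintype.card α) (hcover : Fintype.card α ≤ d * (Fintype.card α - k))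
    (hsum : ∑ i, #{U ∈ powersetCard k univ | U ∉ G i} < (Fintype.card α).choose k) :
    ∃ U : Fin d → Finset α, (∀ i, U i ∈ G i) ∧ univ.inf U = ∅ := by
  obtain ⟨S, hS, hinf⟩ := exists_card_eq_inf_eq_empty hk hcover
  obtain ⟨π, hπ⟩ := exists_perm_forall_smul_mem S hS G hsum
  refine ⟨fun i => π • S i, hπ, eq_empty_of_forall_notMem fun x hx => ?_⟩
  have : π⁻¹ • x ∈ univ.inf S := mem_inf.2 fun i _ =>
    inv_smul_mem_iff.2 (mem_inf.1 hx i (mem_univ i))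
  simp [hinf] at this

theorem card_filter_union_map_notMem_le {β : Type*} [Fintype β] {R : Finset α} (f : β ↪ α)
    (hf : ∀ b, f b ∉ R) (F : Finset (Finset α)) (k : ℕ) :
    #{U ∈ powersetCard k (univ : Finset β) | R ∪ U.map f ∉ F}
      ≤ #{A ∈ powersetCard (#R + k) univ | A ∉ F} := by
  have hdisj : ∀ U : Finset β, Disjoint R (U.map f) := fun U =>
    disjoint_right.2 fun a ha => by obtain ⟨b, -, rfl⟩ := mem_map.1 ha; exact hf b
  refine card_le_card_of_injOn (fun U => R ∪ U.map f) (fun U hU => ?_) fun U _ V _ hUV => ?_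
  · simp only [coe_filter, mem_powersetCard_univ, Set.mem_ofPred_eq] at hU ⊢
    rw [card_union_of_disjoint (hdisj U), card_map, hU.1]
    exact ⟨rfl, hU.2⟩
  · have := congrArg (· \ R) hUV
    simp only [union_sdiff_cancel_left (hdisj _)] at this
    exact map_injective f this

theorem cast_card_filter_notMem_le {k : ℕ} {ε : ℝ} {F : Finset (Finset α)}
    (hF : ∀ A ∈ F, #A = k) (hμ : (#F : ℝ) / (Fintype.card α).choose k ≥ 1 - ε) :
    (#{A ∈ powersetCard k univ | A ∉ F} : ℝ) ≤ ε * (Fintype.card α).choose k := by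
  have hsub : F ⊆ powersetCard k univ := fun A hA => mem_powersetCard_univ.2 (hF A hA)
  have hcard : #{A ∈ powersetCard k univ | A ∉ F} + #F = (Fintype.card α).choose k := by
    rw [filter_notMem_eq_sdiff, card_sdiff_add_card_eq_card hsub, card_powersetCard, card_univ]
  rcases Nat.eq_zero_or_pos ((Fintype.card α).choose k) with h0 | hpos
  · simp [h0, show #{A ∈ powersetCard k univ | A ∉ F} = 0 by omega]
  · rw [ge_iff_le, le_div_iff₀ (by exact_mod_cast hpos)] at hμ
    have : (#{A ∈ powersetCard k univ | A ∉ F} : ℝ) + #F = (Fintype.card α).choose k := by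
      exact_mod_cast hcard
    linarith

theorem sum_card_filter_notMem_lt {ι : Type*} [Fintype ι] {k X : ℕ} {δ : ℝ}
    {G : ι → Finset (Finset α)} (hG : ∀ i, ∀ A ∈ G i, #A = k)
    (hμ : ∀ i, (#(G i) : ℝ) / (Fintype.card α).choose k ≥ 1 - δ / (Fintype.card ι + 1))
    (hδ : 0 < δ) (hk : k ≤ Fintype.card α) (hX : δ * (Fintype.card α).choose k ≤ X) :
    ∑ i, #{A ∈ powersetCard k univ | A ∉ G i} < X := by
  have hC : (0 : ℝ) < (Fintype.card α).choose k := by exact_mod_cast Nat.choose_pos hk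
  have : ((∑ i, #{A ∈ powersetCard k univ | A ∉ G i} : ℕ) : ℝ) < X := calc
    _ ≤ Fintype.card ι * (δ / (Fintype.card ι + 1) * (Fintype.card α).choose k) := by
        push_cast
        exact (sum_le_sum fun i _ => cast_card_filter_notMem_le (hG i) (hμ i)).trans_eq (by simp)
    _ = Fintype.card ι / (Fintype.card ι + 1) * (δ * (Fintype.card α).choose k) := by ring
    _ < δ * (Fintype.card α).choose k := by
        refine mul_lt_of_lt_one_left (by positivity) ?_
        rw [div_lt_one (by positivity)]; linarith
    _ ≤ X := hX
  exact_mod_cast this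

theorem inf_map_eq_empty {ι β : Type*} [Fintype ι] [Nonempty ι] [Fintype β] [DecidableEq β]
    (f : β ↪ α) {U : ι → Finset β} (hU : univ.inf U = ∅) :
    univ.inf (fun i => (U i).map f) = ∅ := by
  refine eq_empty_of_forall_notMem fun z hz => ?_
  obtain ⟨i₀⟩ := ‹Nonempty ι›
  obtain ⟨v, -, rfl⟩ := mem_map.1 (mem_inf.1 hz i₀ (mem_univ _))
  have : v ∈ univ.inf U := mem_inf.2 fun i _ => (mem_map' f).1 (mem_inf.1 hz i (mem_univ _))
  simp [hU] at this

end Fintype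

section Binomial

variable {γ : ℝ}

theorem mul_choose_succ_succ_le {n k : ℕ} (h : γ * (n + 1) ≤ k + 1) :
    γ * (n + 1).choose (k + 1) ≤ n.choose k := by
  have hid : ((n + 1 : ℕ) : ℝ) * n.choose k = (n + 1).choose (k + 1) * ((k + 1 : ℕ) : ℝ) := by
    exact_mod_cast Nat.add_one_mul_choose_eq n k
  push_cast at hid
  have := mul_le_mul_of_nonneg_right h (Nat.cast_nonneg ((n + 1).choose (k + 1)))
  nlinarith

theorem mul_choose_succ_le {n k : ℕ} (hk : k ≤ n) (h : γ * (n + 1) ≤ n + 1 - k) :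
    γ * (n + 1).choose k ≤ n.choose k := by
  have hid : (n.choose k : ℝ) * ((n + 1 : ℕ) : ℝ) = (n + 1).choose k * ((n + 1 - k : ℕ) : ℝ) := by
    exact_mod_cast Nat.choose_mul_succ_eq n k
  rw [Nat.cast_sub (by omega)] at hid
  push_cast at hid
  have := mul_le_mul_of_nonneg_right h (Nat.cast_nonneg ((n + 1).choose k))
  nlinarith

theorem pow_mul_choose_add_add_le (hγ : 0 ≤ γ) {m j : ℕ} :
    ∀ b : ℕ, γ * (m + b) ≤ j + 1 → γ ^ b * (m + b).choose (j + b) ≤ m.choose j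
  | 0, _ => by simp
  | b + 1, h => by
    have hstep : γ * (m + b + 1).choose (j + b + 1) ≤ (m + b).choose (j + b) :=
      mul_choose_succ_succ_le (by push_cast at h ⊢; linarith)
    calc γ ^ (b + 1) * (m + (b + 1)).choose (j + (b + 1))
        = γ ^ b * (γ * (m + b + 1).choose (j + b + 1)) := by ring_nf
      _ ≤ γ ^ b * (m + b).choose (j + b) := by gcongr
      _ ≤ m.choose j := pow_mul_choose_add_add_le hγ b (by push_cast at h; nlinarith)

theorem pow_succ_mul_choose_le_choose_sub (hγ : 0 ≤ γ) {n k b : ℕ} (hbk : b ≤ k) (hkn : k < n)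
    (hlow : γ * n ≤ k - b + 1) (hup : γ * n ≤ n - k) :
    γ ^ (b + 1) * n.choose k ≤ (n - (b + 1)).choose (k - b) := by
  obtain ⟨j, rfl⟩ := Nat.exists_eq_add_of_le' hbk
  obtain ⟨m, rfl⟩ : ∃ m, n = m + b + 1 := ⟨n - (b + 1), by omega⟩
  simp only [Nat.add_sub_cancel, show m + b + 1 - (b + 1) = m by omega]
  push_cast at hlow hup
  calc γ ^ (b + 1) * (m + b + 1).choose (j + b)
      = γ ^ b * (γ * (m + b + 1).choose (j + b)) := by ring
    _ ≤ γ ^ b * (m + b).choose (j + b) := by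
        gcongr; exact mul_choose_succ_le (by omega) (by push_cast; linarith)
    _ ≤ m.choose j := pow_mul_choose_add_add_le hγ b (by nlinarith)

end Binomial

theorem isSimplex_snoc {n d : ℕ} (y : Fin d ↪ Fin n) {T B : Finset (Fin n)}
    (U : Fin d → Finset (Fin n)) (hyB : ∀ i, y i ∈ B) (hT : T.Nonempty) (hTB : Disjoint T B)
    (hU : ∀ i, Disjoint (univ.map y ∪ T) (U i)) (hUinf : univ.inf U = ∅) :
    IsSimplex n d (Fin.snoc (α := fun _ => Finset (Fin n))
      (fun i => (univ.erase i).map y ∪ T ∪ U i) B) := by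
  refine ⟨eq_empty_of_forall_notMem fun z hz => ?_, Fin.lastCases ?_ fun j => ?_⟩
  · simp only [mem_inf, mem_univ, forall_const, Fin.forall_fin_succ', Fin.snoc_castSucc,
      Fin.snoc_last] at hz
    obtain ⟨hzA, hzB⟩ := hz
    have hzT : z ∉ T := disjoint_right.1 hTB hzB
    have hzy : ∀ j, y j ≠ z := by
      rintro j rfl
      have : y j ∈ U j := by simpa [hzT] using hzA j
      exact disjoint_left.1 (hU j) (by simp) this
    have : z ∈ univ.inf U := mem_inf.2 fun i _ => by simpa [hzT, hzy] using hzA i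
    simp [hUinf] at this
  · obtain ⟨τ, hτ⟩ := hT
    refine ⟨τ, mem_inf.2 fun i hi => ?_⟩
    obtain ⟨j, rfl⟩ := Fin.exists_castSucc_eq.2 (ne_of_mem_erase hi)
    simp [hτ]
  · refine ⟨y j, mem_inf.2 fun i hi => ?_⟩
    cases i using Fin.lastCases with
    | last => simpa using hyB j
    | cast i =>
      have : j ≠ i := fun h => ne_of_mem_erase hi (h ▸ rfl)
      simp [this]

theorem exists_isSimplex_of_sum_lt {n d t m k : ℕ} (hd : 0 < d) (ht : 0 < t)
    {F : Fin (d + 1) → Finset (Finset (Fin n))} {B : Finset (Fin n)} (hB : B ∈ F (Fin.last d))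
    (hdB : d ≤ #B) (htB : #B + t ≤ n) (hn : n = d + t + m) (hkm : k ≤ m)
    (hcover : m ≤ d * (m - k))
    (hsum : ∑ i : Fin d, #{A ∈ powersetCard (d - 1 + t + k) univ | A ∉ F i.castSucc}
      < m.choose k) :
    ∃ A, (∀ i, A i ∈ F i) ∧ IsSimplex n d A := by
  obtain ⟨Y, hYB, hY⟩ := exists_subset_card_eq hdB
  obtain ⟨T, hTB, hT⟩ := exists_subset_card_eq (s := Bᶜ) (n := t)
    (by rw [card_compl, Fintype.card_fin]; omega)
  have hYT : Disjoint Y T := disjoint_of_subset_left hYB (subset_compl_iff_disjoint_left.1 hTB)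
  set y : Fin d ↪ Fin n := (Y.orderEmbOfFin hY).toEmbedding
  have hyY : univ.map y = Y := map_orderEmbOfFin_univ Y hY
  set V := (Y ∪ T)ᶜ
  have hV : Fintype.card V = m := by
    rw [Fintype.card_coe, card_compl, card_union_of_disjoint hYT, Fintype.card_fin]; omega
  set f : V ↪ Fin n := Function.Embedding.subtype (· ∈ V)
  have hfV : ∀ v, f v ∉ Y ∪ T := fun v => mem_compl.1 v.2
  set R : Fin d → Finset (Fin n) := fun i => (univ.erase i).map y ∪ T
  have hRY : ∀ i, R i ⊆ Y ∪ T := fun i =>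
    union_subset_union (hyY ▸ map_subset_map.2 (erase_subset _ _)) le_rfl
  have hR : ∀ i, #(R i) = d - 1 + t := fun i => by
    rw [card_union_of_disjoint, card_map, card_erase_of_mem (mem_univ _), card_univ,
      Fintype.card_fin, hT]
    exact disjoint_of_subset_left (hyY ▸ map_subset_map.2 (erase_subset _ _)) hYT
  set G : Fin d → Finset (Finset V) := fun i => {U | R i ∪ U.map f ∈ F i.castSucc}
  obtain ⟨U, hUG, hUinf⟩ := exists_forall_mem_inf_eq_empty G (hV ▸ hkm) (hV ▸ hcover) <| by
    refine hV ▸ (sum_le_sum fun i _ => ?_).trans_lt hsum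
    simpa [G, hR] using
      card_filter_union_map_notMem_le f (fun v hv => hfV v (hRY i hv)) (F i.castSucc) k
  have : Nonempty (Fin d) := ⟨⟨0, hd⟩⟩
  refine ⟨Fin.snoc (fun i => R i ∪ (U i).map f) B,
    Fin.lastCases (by simpa using hB) fun i => by simpa [G] using hUG i,
    isSimplex_snoc y _ (fun i => hYB (hyY ▸ mem_map_of_mem y (mem_univ i)))
      (card_pos.1 (hT ▸ ht)) (subset_compl_iff_disjoint_right.1 hTB) (fun i => ?_)
      (inf_map_eq_empty f hUinf)⟩
  rw [hyY]
  exact disjoint_right.2 fun a ha => by obtain ⟨v, -, rfl⟩ := mem_map.1 ha; exact hfV v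

theorem mul_add_lt_of_lt_div {d n k : ℕ} (hd : 0 < d)
    (h : (k : ℝ) < ((d : ℝ) - 1) * n / d + d + 1) : d * k + n < d * n + d * (d + 1) := by
  have hd' : (0 : ℝ) < d := by exact_mod_cast hd
  have : (d : ℝ) * k < (d - 1) * n + d * (d + 1) := by
    have := mul_lt_mul_of_pos_left h hd'
    rw [mul_add, mul_add, mul_div_cancel₀ _ hd'.ne'] at this
    linarith
  exact_mod_cast (by linarith : (d : ℝ) * k + n < d * n + d * (d + 1))

theorem exists_isSimplex_of_window {n d k : ℕ} (hd : 0 < d)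
    {F : Fin (d + 1) → Finset (Finset (Fin n))} {B : Finset (Fin n)} (hB : B ∈ F (Fin.last d))
    (hdB : d ≤ #B) (hBn : #B + d * (d + 1) ≤ n) (hw : d * k + n < d * n + d * (d + 1))
    (hk : d * (d + 2) - 1 ≤ k) (hkn : k < n)
    (hsum : ∑ i : Fin d, #{A ∈ powersetCard k univ | A ∉ F i.castSucc}
      < (n - d * (d + 2)).choose (k - (d * (d + 2) - 1))) :
    ∃ A, (∀ i, A i ∈ F i) ∧ IsSimplex n d A := by
  obtain ⟨c, hc⟩ : ∃ c, d * (d + 2) = c + 1 :=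
    ⟨_, (Nat.sub_add_cancel (Nat.mul_pos hd (by omega))).symm⟩
  have hdt : d + d * (d + 1) = c + 1 := by linarith
  rw [hc, Nat.add_sub_cancel] at hk hsum
  have hcover : n - (c + 1) ≤ d * (n - (c + 1) - (k - c)) := by
    obtain ⟨j, rfl⟩ := Nat.exists_eq_add_of_le' hk
    obtain ⟨r, rfl⟩ : ∃ r, n = j + r + (c + 1) := ⟨n - (c + 1) - j, by omega⟩
    simp only [Nat.add_sub_cancel, Nat.add_sub_cancel_left]
    nlinarith
  refine exists_isSimplex_of_sum_lt (t := d * (d + 1)) (m := n - (c + 1)) (k := k - c) hd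
    (by positivity) hB hdB hBn (by omega) (by omega) hcover ?_
  rwa [show d - 1 + d * (d + 1) + (k - c) = k by omega]

theorem pow_mul_choose_le_of_window {d n k : ℕ} {ζ : ℝ} (hd : 0 < d) (hζ0 : 0 < ζ) (hζ1 : ζ < 1)
    (hζn : 2 * ((d : ℝ) + 1) ^ 2 < ζ * n) (hk : ζ * n < k)
    (hw : d * k + n < d * n + d * (d + 1)) (hn : 2 * d * (d + 1) ≤ n) :
    (ζ / (2 * (d + 1))) ^ (d * (d + 2)) * n.choose k
      ≤ (n - d * (d + 2)).choose (k - (d * (d + 2) - 1)) := by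
  obtain ⟨c, hc⟩ : ∃ c, d * (d + 2) = c + 1 :=
    ⟨_, (Nat.sub_add_cancel (Nat.mul_pos hd (by omega))).symm⟩
  rw [hc, Nat.add_sub_cancel]
  set γ := ζ / (2 * (d + 1))
  have hγn : 2 * (d + 1) * (γ * n) = ζ * n := by simp only [γ]; field_simp
  have hc' : (c : ℝ) + 2 = (d + 1) ^ 2 := by
    have : ((d * (d + 2) : ℕ) : ℝ) = c + 1 := by exact_mod_cast hc
    push_cast at this; linarith
  have hck : c < k := by
    have : (c : ℝ) < k := by nlinarith
    exact_mod_cast this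
  have hkn : k < n := by nlinarith
  have hlow : γ * n ≤ k - c + 1 := by nlinarith
  have hup : γ * n ≤ n - k := by
    have hw : (d : ℝ) * k + n < d * n + d * (d + 1) := by exact_mod_cast hw
    have hn : 2 * (d : ℝ) * (d + 1) ≤ n := by exact_mod_cast hn
    have : (d : ℝ) * (γ * n) < d * (n - k) := by nlinarith
    exact (lt_of_mul_lt_mul_left this (Nat.cast_nonneg d)).le
  exact pow_succ_mul_choose_le_choose_sub (by positivity) hck.le hkn hlow hup

theorem stmt17 (d : ℕ) (ζ : ℝ) (hζ : ζ ∈ Set.Ioo (0:ℝ) 1) :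
    ∃ (ε₀ : ℝ) (n₀ : ℕ), 0 < ε₀ ∧
      ∀ (n k₁ k₂ : ℕ) (F : Fin (d + 1) → Finset (Finset (Fin n))),
        n₀ < n →
        ζ * n < (k₁ : ℝ) → (k₁ : ℝ) < ((d : ℝ) - 1) * n / d + d + 1 →
        ζ * n < (k₂ : ℝ) → (k₂ : ℝ) < ((d : ℝ) - 1) * n / d + d + 1 →
        (∀ i : Fin (d + 1), i ≠ Fin.last d → ∀ A ∈ F i, A.card = k₁) →
        (∀ A ∈ F (Fin.last d), A.card = k₂) →
        (¬ ∃ A : Fin (d + 1) → Finset (Fin n), (∀ i, A i ∈ F i) ∧ IsSimplex n d A) →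
        (∀ i : Fin (d + 1), i ≠ Fin.last d →
          ((F i).card : ℝ) / (n.choose k₁) ≥ 1 - ε₀) →
        F (Fin.last d) = ∅ := by
  obtain ⟨hζ0, hζ1⟩ := hζ
  set δ : ℝ := (ζ / (2 * (d + 1))) ^ (d * (d + 2))
  have hδ : 0 < δ := pow_pos (by positivity) _
  refine ⟨δ / (d + 1), ⌈2 * ((d : ℝ) + 1) ^ 2 / ζ⌉₊ + (d + 1) ^ 3, by positivity, ?_⟩
  intro n k₁ k₂ F hn hk₁ hk₁' hk₂ hk₂' hF hFlast hfree hμ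
  have hζn : 2 * ((d : ℝ) + 1) ^ 2 < ζ * n := by
    have := (Nat.le_ceil _).trans_lt (Nat.cast_lt (α := ℝ).2
      (by omega : ⌈2 * ((d : ℝ) + 1) ^ 2 / ζ⌉₊ < n))
    rwa [div_lt_iff₀' hζ0] at this
  have hk₁0 : 2 * (d + 1) ^ 2 < k₁ := by exact_mod_cast hζn.trans hk₁
  have hk₂0 : 2 * (d + 1) ^ 2 < k₂ := by exact_mod_cast hζn.trans hk₂
  obtain rfl | hd := Nat.eq_zero_or_pos d
  -- for `d = 0` the upper bound reads `k₁ < 1`, since `x / 0 = 0`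
  · norm_num at hk₁'
    omega
  have hw₁ := mul_add_lt_of_lt_div hd hk₁'
  have hw₂ := mul_add_lt_of_lt_div hd hk₂'
  have hn3 : (d + 1) ^ 3 < n := by omega
  have hk₁n : k₁ < n := by nlinarith
  have hk₁b : d * (d + 2) - 1 ≤ k₁ := by
    have : d * (d + 2) ≤ 2 * (d + 1) ^ 2 := by nlinarith
    omega
  refine eq_empty_iff_forall_notMem.2 fun B hB => hfree ?_
  refine exists_isSimplex_of_window hd hB (by rw [hFlast B hB]; nlinarith)
    (by rw [hFlast B hB]; nlinarith) hw₁ hk₁b hk₁n ?_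
  exact sum_card_filter_notMem_lt (fun i => hF _ (Fin.castSucc_ne_last i))
    (fun i => by simpa using hμ _ (Fin.castSucc_ne_last i)) hδ (by simpa using hk₁n.le)
    (by simpa using pow_mul_choose_le_of_window hd hζ0 hζ1 hζn hk₁ hw₁ (by nlinarith))
end

section
/- Let F ⊆ binom([n], k) be a family that does not contain a d-simplex. (1) If {B₁, …, B_{d+1}} is a d-simplex of subsets of a set B ⊆ [n], then the families F_B^{B₁}, …, F_B^{B_{d+1}} are (d+1)-wise cross intersecting. (2) If B₁, …, B_{d+1} ⊆ B have empty total intersection, then the families F_B^{B₁}, …, F_B^{B_{d+1}} are cross free of a d-simplex. -/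
/-!
Pick, for each `i`, a set `A i ∈ F` with `A i ∩ B = Bs i` whose trace outside `B` is the given
member of the slice. A point common to all `A i` lies in every `Bs i` or in every `A i \ Bs i`,
so the `A i` have empty intersection as soon as both the `Bs i` and the slice members do; and
the nonempty `d`-wise intersections of either the `Bs i` or the slice members pass up to the
`A i`. In both parts the `A i` would therefore form a `d`-simplex in `F`.
-/

open Finset

/-- The slice `F_B^{B'}` of the paper. -/
def slice {α : Type*} [DecidableEq α] (F : Finset (Finset α)) (B B' : Finset α) :
    Finset (Finset α) :=
  (F.filter (fun A => A ∩ B = B')).image (fun A => A \ B')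

theorem exists_forall_mem_of_forall_mem_slice {α ι : Type*} [DecidableEq α]
    {F : Finset (Finset α)} {B : Finset α} {Bs D : ι → Finset α}
    (hD : ∀ i, D i ∈ slice F B (Bs i)) :
    ∃ A : ι → Finset α, (∀ i, A i ∈ F) ∧ (∀ i, A i ∩ B = Bs i) ∧ D = fun i => A i \ Bs i := by
  choose A hA hAD using fun i => mem_image.1 (hD i)
  exact ⟨A, fun i => (mem_filter.1 (hA i)).1, fun i => (mem_filter.1 (hA i)).2,
    funext fun i => (hAD i).symm⟩

theorem univ_inf_eq_empty_of_inter_eq {α ι : Type*} [Fintype α] [DecidableEq α] [Fintype ι]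
    {A Bs : ι → Finset α} {B : Finset α} (hAB : ∀ i, A i ∩ B = Bs i)
    (hBs : univ.inf Bs = ∅) (hdiff : univ.inf (fun i => A i \ Bs i) = ∅) :
    univ.inf A = ∅ := by
  refine eq_empty_of_forall_notMem fun x hx => ?_
  rw [mem_inf] at hx
  by_cases hxB : x ∈ B
  · have : x ∈ univ.inf Bs :=
      mem_inf.2 fun i hi => hAB i ▸ mem_inter.2 ⟨hx i hi, hxB⟩
    simp [hBs] at this
  · have : x ∈ univ.inf (fun i => A i \ Bs i) :=
      mem_inf.2 fun i hi => mem_sdiff.2 ⟨hx i hi, fun h => hxB (mem_inter.1 (hAB i ▸ h)).2⟩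
    simp [hdiff] at this

theorem isSimplex_of_subset {n d : ℕ} {A C : Fin (d + 1) → Finset (Fin n)}
    (hCA : ∀ i, C i ⊆ A i) (hC : ∀ i, ((univ.erase i).inf C).Nonempty)
    (hA : univ.inf A = ∅) : IsSimplex n d A :=
  ⟨hA, fun i => (hC i).mono (inf_mono_fun fun j _ => hCA j)⟩

theorem stmt18_general (n d : ℕ) (F : Finset (Finset (Fin n)))
    (hfree : ¬ ∃ A : Fin (d + 1) → Finset (Fin n), (∀ i, A i ∈ F) ∧ IsSimplex n d A)
    (B : Finset (Fin n)) (Bs : Fin (d + 1) → Finset (Fin n)) :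
    (IsSimplex n d Bs →
      ∀ D : Fin (d + 1) → Finset (Fin n),
        (∀ i, D i ∈ (F.filter (fun A => A ∩ B = Bs i)).image (fun A => A \ Bs i)) →
        (Finset.univ.inf D).Nonempty) ∧
    (Finset.univ.inf Bs = ∅ →
      ¬ ∃ D : Fin (d + 1) → Finset (Fin n),
        (∀ i, D i ∈ (F.filter (fun A => A ∩ B = Bs i)).image (fun A => A \ Bs i)) ∧
        IsSimplex n d D) := by
  constructor
  · rintro ⟨hBs, hBs_erase⟩ D hD
    obtain ⟨A, hAF, hAB, rfl⟩ := exists_forall_mem_of_forall_mem_slice hD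
    rw [nonempty_iff_ne_empty]
    intro hdiff
    exact hfree ⟨A, hAF, isSimplex_of_subset (fun i => hAB i ▸ inter_subset_left) hBs_erase
      (univ_inf_eq_empty_of_inter_eq hAB hBs hdiff)⟩
  · rintro hBs ⟨D, hD, hdiff, hD_erase⟩
    obtain ⟨A, hAF, hAB, rfl⟩ := exists_forall_mem_of_forall_mem_slice hD
    exact hfree ⟨A, hAF, isSimplex_of_subset (fun i => sdiff_subset) hD_erase
      (univ_inf_eq_empty_of_inter_eq hAB hBs hdiff)⟩

theorem stmt18 (n k d : ℕ) (F : Finset (Finset (Fin n))) (hF : ∀ A ∈ F, A.card = k)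
    (hfree : ¬ ∃ A : Fin (d + 1) → Finset (Fin n), (∀ i, A i ∈ F) ∧ IsSimplex n d A)
    (B : Finset (Fin n)) (Bs : Fin (d + 1) → Finset (Fin n)) (hBs : ∀ i, Bs i ⊆ B) :
    (IsSimplex n d Bs →
      ∀ D : Fin (d + 1) → Finset (Fin n),
        (∀ i, D i ∈ (F.filter (fun A => A ∩ B = Bs i)).image (fun A => A \ Bs i)) →
        (Finset.univ.inf D).Nonempty) ∧
    (Finset.univ.inf Bs = ∅ →
      ¬ ∃ D : Fin (d + 1) → Finset (Fin n),
        (∀ i, D i ∈ (F.filter (fun A => A ∩ B = Bs i)).image (fun A => A \ Bs i)) ∧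
        IsSimplex n d D) :=
  stmt18_general n d F hfree B Bs
end

section
/- For distinct a, b, c ∈ [n], the family F = {A ∈ binom([n], k) : |A ∩ {a,b,c}| = 1} is free of the k-expansion H⁺ of the hypergraph H = {{1,2},{1,4},{1,5},{2,6},{2,7},{3}}, i.e., F contains no six sets forming a copy of H⁺. -/
open Finset

def pat : Fin 6 → Finset (Fin 7) := ![{0, 1}, {0, 3}, {0, 4}, {1, 5}, {1, 6}, {2}]

open Classical in
theorem stmt19 (n k : ℕ) (a b c : Fin n) (hab : a ≠ b) (hac : a ≠ c) (hbc : b ≠ c) :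
    ¬ ∃ (φ : Fin 7 → Fin n) (E : Fin 6 → Finset (Fin n)),
        Function.Injective φ ∧
        (∀ i j, i ≠ j → Disjoint (E i) (E j)) ∧
        (∀ i, Disjoint (E i) (Finset.univ.image φ)) ∧
        (∀ i : Fin 6,
          ((![({0, 1} : Finset (Fin 7)), {0, 3}, {0, 4}, {1, 5}, {1, 6}, {2}] i).image φ
              ∪ E i) ∈
            Finset.univ.filter (fun A : Finset (Fin n) =>
              A.card = k ∧ (A ∩ {a, b, c}).card = 1)) := by
  rintro ⟨φ, E, hφ, hEE, hEφ, hmem⟩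
  set S : Finset (Fin n) := {a, b, c} with hS
  have hF : ∀ i : Fin 6, (((pat i).image φ ∪ E i) ∩ S).card = 1 := by
    intro i
    have h := hmem i
    rw [mem_filter] at h
    exact h.2.2
  have key : ∀ i j : Fin 6, i ≠ j → ∀ x, x ∈ (pat i).image φ ∪ E i →
      x ∈ (pat j).image φ ∪ E j → ∃ t, t ∈ pat i ∧ t ∈ pat j ∧ φ t = x := by
    intro i j hij x hxi hxj
    rw [mem_union] at hxi hxj
    have himg : ∀ l : Fin 6, ∀ y, y ∈ E l → y ∉ Finset.univ.image φ := by
      intro l y hy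
      exact fun h => Finset.disjoint_left.mp (hEφ l) hy h
    rcases hxi with hxi | hxi
    · obtain ⟨t, ht, rfl⟩ := mem_image.mp hxi
      rcases hxj with hxj | hxj
      · obtain ⟨t', ht', h⟩ := mem_image.mp hxj
        exact ⟨t, ht, hφ h ▸ ht', rfl⟩
      · exact absurd (mem_image_of_mem φ (mem_univ t)) (himg j _ hxj)
    · rcases hxj with hxj | hxj
      · obtain ⟨t', ht', h⟩ := mem_image.mp hxj
        exact absurd (h ▸ mem_image_of_mem φ (mem_univ t')) (himg i _ hxi)
      · exact absurd hxj (Finset.disjoint_left.mp (hEE i j hij) hxi)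
  have hone : ∀ i : Fin 6, ∃ s, ((pat i).image φ ∪ E i) ∩ S = {s} :=
    fun i => Finset.card_eq_one.mp (hF i)
  choose s hs using hone
  have hsF : ∀ i, s i ∈ (pat i).image φ ∪ E i := fun i =>
    (Finset.mem_inter.mp (hs i ▸ Finset.mem_singleton_self (s i))).1
  have hsS : ∀ i, s i ∈ S := fun i =>
    (Finset.mem_inter.mp (hs i ▸ Finset.mem_singleton_self (s i))).2
  -- distinctness from empty pattern intersections
  have hdist : ∀ i j : Fin 6, i ≠ j → (∀ t : Fin 7, ¬(t ∈ pat i ∧ t ∈ pat j)) →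
      s i ≠ s j := by
    intro i j hij hemp h
    obtain ⟨t, ht1, ht2, _⟩ := key i j hij (s i) (hsF i) (h ▸ hsF j)
    exact hemp t ⟨ht1, ht2⟩
  have h13 : s 1 ≠ s 3 := hdist 1 3 (by decide) (by decide)
  have h14 : s 1 ≠ s 4 := hdist 1 4 (by decide) (by decide)
  have h23 : s 2 ≠ s 3 := hdist 2 3 (by decide) (by decide)
  have h15 : s 1 ≠ s 5 := hdist 1 5 (by decide) (by decide)
  have h25 : s 2 ≠ s 5 := hdist 2 5 (by decide) (by decide)
  have h35 : s 3 ≠ s 5 := hdist 3 5 (by decide) (by decide)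
  have h45 : s 4 ≠ s 5 := hdist 4 5 (by decide) (by decide)
  have hS3 : S.card = 3 := by
    rw [hS, card_insert_of_notMem (by simp [hab, hac]),
      card_insert_of_notMem (by simp [hbc]), card_singleton]
  -- any four of the s's that are pairwise distinct would exceed |S| = 3
  have four : ∀ x y z w : Fin n, x ∈ S → y ∈ S → z ∈ S → w ∈ S →
      x ≠ y → x ≠ z → x ≠ w → y ≠ z → y ≠ w → z ≠ w → False := by
    intro x y z w hx hy hz hw hxy hxz hxw hyz hyw hzw
    have hsub : ({x, y, z, w} : Finset (Fin n)) ⊆ S := by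
      intro u hu
      simp only [mem_insert, mem_singleton] at hu
      rcases hu with rfl | rfl | rfl | rfl <;> assumption
    have hc : ({x, y, z, w} : Finset (Fin n)).card = 4 := by
      rw [card_insert_of_notMem (by simp [hxy, hxz, hxw]),
        card_insert_of_notMem (by simp [hyz, hyw]),
        card_insert_of_notMem (by simp [hzw]), card_singleton]
    have := Finset.card_le_card hsub
    omega
  have h12 : s 1 = s 2 := by
    by_contra h12
    exact four (s 1) (s 2) (s 3) (s 5) (hsS 1) (hsS 2) (hsS 3) (hsS 5)
      h12 h13 h15 h23 h25 h35
  have h34 : s 3 = s 4 := by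
    by_contra h34
    exact four (s 3) (s 4) (s 1) (s 5) (hsS 3) (hsS 4) (hsS 1) (hsS 5)
      h34 (Ne.symm h13) h35 (Ne.symm h14) h45 h15
  -- s 1 = φ 0 and s 3 = φ 1
  obtain ⟨t, ht1, ht2, htφ⟩ := key 1 2 (by decide) (s 1) (hsF 1) (h12 ▸ hsF 2)
  have ht0 : t = 0 := by
    have : ∀ v : Fin 7, v ∈ pat 1 → v ∈ pat 2 → v = 0 := by decide
    exact this t ht1 ht2
  subst ht0
  obtain ⟨u, hu1, hu2, huφ⟩ := key 3 4 (by decide) (s 3) (hsF 3) (h34 ▸ hsF 4)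
  have hu0 : u = 1 := by
    have : ∀ v : Fin 7, v ∈ pat 3 → v ∈ pat 4 → v = 1 := by decide
    exact this u hu1 hu2
  subst hu0
  -- both φ 0 and φ 1 lie in edge 0 ∩ S = {s 0}
  have hφ0 : φ 0 ∈ ((pat 0).image φ ∪ E 0) ∩ S := by
    refine Finset.mem_inter.mpr ⟨Finset.mem_union_left _ ?_, htφ ▸ hsS 1⟩
    exact mem_image_of_mem φ (by decide)
  have hφ1 : φ 1 ∈ ((pat 0).image φ ∪ E 0) ∩ S := by
    refine Finset.mem_inter.mpr ⟨Finset.mem_union_left _ ?_, huφ ▸ hsS 3⟩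
    exact mem_image_of_mem φ (by decide)
  rw [hs 0, Finset.mem_singleton] at hφ0 hφ1
  exact h13 (htφ ▸ huφ ▸ (hφ0.trans hφ1.symm))
end
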